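/- arXiv:1307.3312 — 9 statements merged into one kernel-verified Lean document; each statement's English description precedes it below -/
import Mathlib

section
/- If a list of positive integers x_1, ..., x_s has sum at most 2s-1, then for every integer k with 0 ≤ k ≤ s there is a sublist (subset of indices) whose sum equals k. -/
/-!
Build the index set up in increasing order of `x`, keeping it *complete*: every `k ≤ ∑_A x` is
a subset sum. Adding `a` preserves completeness once `x a ≤ ∑_A x + 1`, because the new sums
`x a + k` then overlap the old range `[0, ∑_A x]`. Removing a largest entry preserves
`∑ x ≤ 2|A| - 1` (clear if it is `≥ 2`; otherwise all entries are `1`), and positivity gives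
`∑_A x ≥ |A|`, so `x a ≤ 2|A| + 1 - ∑_A x ≤ ∑_A x + 1`. Finally `k ≤ s ≤ ∑ x`.
-/

open Finset

variable {ι : Type*}

def SubsetSumComplete (A : Finset ι) (x : ι → ℕ) : Prop :=
  ∀ k ≤ ∑ i ∈ A, x i, ∃ T ⊆ A, ∑ i ∈ T, x i = k

lemma subsetSumComplete_empty (x : ι → ℕ) : SubsetSumComplete ∅ x := fun k hk =>
  ⟨∅, Subset.rfl, by simp_all⟩

variable [DecidableEq ι]

lemma SubsetSumComplete.insert {A : Finset ι} {x : ι → ℕ} {a : ι} (ha : a ∉ A)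
    (hA : SubsetSumComplete A x) (hxa : x a ≤ ∑ i ∈ A, x i + 1) :
    SubsetSumComplete (insert a A) x := by
  intro k hk
  rw [sum_insert ha] at hk
  by_cases hkA : k ≤ ∑ i ∈ A, x i
  · obtain ⟨T, hTA, hT⟩ := hA k hkA
    exact ⟨T, hTA.trans (subset_insert a A), hT⟩
  · obtain ⟨T, hTA, hT⟩ := hA (k - x a) (by omega)
    refine ⟨Insert.insert a T, insert_subset_insert a hTA, ?_⟩
    rw [sum_insert (fun haT => ha (hTA haT)), hT]
    omega

lemma sum_le_two_mul_card_sub_one_of_insert_of_le {A : Finset ι} {x : ι → ℕ} {a : ι}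
    (ha : a ∉ A) (hmax : ∀ i ∈ A, x i ≤ x a)
    (h : ∑ i ∈ insert a A, x i ≤ 2 * #(insert a A) - 1) :
    ∑ i ∈ A, x i ≤ 2 * #A - 1 := by
  rw [sum_insert ha, card_insert_of_notMem ha] at h
  rcases Nat.lt_or_ge (x a) 2 with hxa | hxa
  · have hle : ∑ i ∈ A, x i ≤ #A := by
      simpa using sum_le_card_nsmul A x 1 fun i hi => by have := hmax i hi; omega
    omega
  · omega

lemma subsetSumComplete_of_sum_le_two_mul_card_sub_one (A : Finset ι) {x : ι → ℕ}
    (hpos : ∀ i ∈ A, 0 < x i) (hsum : ∑ i ∈ A, x i ≤ 2 * #A - 1) :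
    SubsetSumComplete A x := by
  induction A using induction_on_max_value x with
  | empty => exact subsetSumComplete_empty x
  | insert a A ha hmax ih =>
    have hsum' := sum_le_two_mul_card_sub_one_of_insert_of_le ha hmax hsum
    have hcard : #A ≤ ∑ i ∈ A, x i := by
      simpa using card_nsmul_le_sum A x 1 fun i hi => hpos i (mem_insert_of_mem hi)
    rw [sum_insert ha, card_insert_of_notMem ha] at hsum
    exact (ih (fun i hi => hpos i (mem_insert_of_mem hi)) hsum').insert ha (by omega)

theorem sublist_sums (s : ℕ) (x : Fin s → ℕ) (hpos : ∀ i, 0 < x i)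
    (hsum : ∑ i, x i ≤ 2 * s - 1) :
    ∀ k : ℕ, k ≤ s → ∃ T : Finset (Fin s), ∑ i ∈ T, x i = k := by
  intro k hk
  have hs : s ≤ ∑ i, x i := by
    simpa using card_nsmul_le_sum univ x 1 fun i _ => hpos i
  obtain ⟨T, -, hT⟩ := subsetSumComplete_of_sum_le_two_mul_card_sub_one univ
    (fun i _ => hpos i) (by simpa using hsum) k (hk.trans hs)
  exact ⟨T, hT⟩
end

section
/- For all n ≤ k ≤ 2n, the ratio binom(2n, k) / binom(2n, n) is at most exp(-(2/n) * binom(2n-k, 2)). Equivalently, for k ≤ n, binom(2n,k)/binom(2n,n) ≤ exp(-(2/n)*binom(n-k,2)). -/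
/-!
Stepping down from the middle, `C(2n, n-d-1) = C(2n, n-d) · (n-d)/(n+d+1)`, and with `t = d/n`
this factor is at most `(1-t)/(1+t) ≤ e^{-2t}`, the last inequality being `2 artanh t ≥ 2t`.
The exponents `-(2/n)·d` for `d = 0, …, m-1` add up to `-(2/n)·C(m,2)`.
-/

open Real

theorem two_mul_le_log_one_add_sub_log_one_sub {t : ℝ} (h₀ : 0 ≤ t) (h₁ : t < 1) :
    2 * t ≤ log (1 + t) - log (1 - t) := by
  have hs := hasSum_log_sub_log_of_abs_lt_one (abs_lt.2 ⟨by linarith, h₁⟩)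
  simpa using le_hasSum hs 0 fun j _ => by positivity

theorem one_sub_div_one_add_le_exp {t : ℝ} (ht : 0 ≤ t) :
    (1 - t) / (1 + t) ≤ exp (-(2 * t)) := by
  rcases lt_or_ge t 1 with h₁ | h₁
  · calc (1 - t) / (1 + t) = exp (-(log (1 + t) - log (1 - t))) := by
          rw [exp_neg, exp_sub, exp_log (by linarith), exp_log (by linarith), inv_div]
      _ ≤ exp (-(2 * t)) := by
          gcongr; exact two_mul_le_log_one_add_sub_log_one_sub ht h₁
  · exact (div_nonpos_of_nonpos_of_nonneg (by linarith) (by linarith)).trans (exp_pos _).le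

theorem sub_div_add_le_exp {n x : ℝ} (hn : 0 < n) (hx : 0 ≤ x) :
    (n - x) / (n + x) ≤ exp (-(2 / n) * x) :=
  calc (n - x) / (n + x) = (1 - x / n) / (1 + x / n) := by field_simp
    _ ≤ exp (-(2 * (x / n))) := one_sub_div_one_add_le_exp (by positivity)
    _ = exp (-(2 / n) * x) := by ring_nf

theorem cast_choose_two_mul_sub_succ (n d : ℕ) (hd : d < n) :
    ((2 * n).choose (n - (d + 1)) : ℝ) = (2 * n).choose (n - d) * ((n - d) / (n + d + 1)) := by
  have h := Nat.choose_succ_right_eq (2 * n) (n - (d + 1))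
  rw [show n - (d + 1) + 1 = n - d by omega, show 2 * n - (n - (d + 1)) = n + d + 1 by omega] at h
  have hR : ((2 * n).choose (n - d) : ℝ) * (n - d) = (2 * n).choose (n - (d + 1)) * (n + d + 1) := by
    rw [← Nat.cast_sub hd.le]; exact_mod_cast h
  rw [mul_div_assoc', hR, mul_div_cancel_right₀ _ (by positivity)]

theorem cast_choose_two_mul_sub_div_choose_le_exp (n : ℕ) {d : ℕ} (hd : d ≤ n) :
    ((2 * n).choose (n - d) : ℝ) / (2 * n).choose n ≤ exp (-(2 / n) * d.choose 2) := by
  induction d with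
  | zero => simpa using div_self_le_one _
  | succ d ih =>
    have hn : (0 : ℝ) < n := by exact_mod_cast (by omega : 0 < n)
    have hdn : (d : ℝ) ≤ n := by exact_mod_cast (by omega : d ≤ n)
    have hfactor : ((n : ℝ) - d) / (n + d + 1) ≤ exp (-(2 / n) * d) :=
      (div_le_div_of_nonneg_left (by linarith) (by positivity) (by linarith)).trans
        (sub_div_add_le_exp hn d.cast_nonneg)
    calc ((2 * n).choose (n - (d + 1)) : ℝ) / (2 * n).choose n
        = (2 * n).choose (n - d) / (2 * n).choose n * ((n - d) / (n + d + 1)) := by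
          rw [cast_choose_two_mul_sub_succ n d (by omega)]; ring
      _ ≤ exp (-(2 / n) * d.choose 2) * exp (-(2 / n) * d) := by
          gcongr
          exact ih (by omega)
      _ = exp (-(2 / n) * (d + 1).choose 2) := by
          rw [← exp_add, Nat.choose_succ_succ', Nat.choose_one_right]; push_cast; congr 1; ring

theorem binom_ratio_bound (n k : ℕ) (hk : k ≤ n) :
    ((2 * n).choose k : ℝ) / ((2 * n).choose n : ℝ) ≤
      Real.exp (-(2 / (n : ℝ)) * ((n - k).choose 2 : ℝ)) := by
  simpa [Nat.sub_sub_self hk] using cast_choose_two_mul_sub_div_choose_le_exp n (Nat.sub_le n k)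
end

section
/- Define α_d(n) recursively by α_1(n) = 1 and α_{d+1}(n) = 1/2 + sqrt(2n·α_d(n) + 1/4). Then for all d ≥ 2 and n ≥ 1, (2n)^(1 - 2^(1-d)) ≤ α_d(n) ≤ (4n)^(1 - 2^(1-d)). -/
/-! Induction on `d` from `d = 1`, where both bounds equal `1`. Write `e d = 1 - 2 ^ (1 - d)`,
so that `2 e (d + 1) = 1 + e d`. Hence for `y = 2n` or `y = 4n` the candidate bound
`y ^ e (d + 1)` squares to `y · y ^ e d`, which is exactly what
the recursion `α ↦ 1/2 + √(2nα + 1/4)` needs: squaring the lower bound `(2n) ^ e (d + 1)` gives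
`2n · (2n) ^ e d ≤ 2nα`, and the upper bound `M = (4n) ^ e (d + 1)` satisfies
`M² = 2 · 2n · (4n) ^ e d ≥ 4`, so `M ≤ M²/2` leaves room for the `1/2` and the `1/4`. -/

noncomputable def alpha (n : ℕ) : ℕ → ℝ
  | 0 => 1
  | 1 => 1
  | (d + 2) => 1 / 2 + Real.sqrt (2 * n * alpha n (d + 1) + 1 / 4)

open Real

lemma alpha_succ {n d : ℕ} (hd : 1 ≤ d) :
    alpha n (d + 1) = 1 / 2 + √(2 * n * alpha n d + 1 / 4) := by
  obtain ⟨k, rfl⟩ := Nat.exists_eq_add_of_le' hd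
  rfl

lemma two_mul_one_sub_two_rpow_one_sub_succ (d : ℝ) :
    2 * (1 - (2 : ℝ) ^ (1 - (d + 1))) = 1 + (1 - 2 ^ (1 - d)) := by
  rw [show 1 - (d + 1) = (1 - d) - 1 by ring, rpow_sub_one two_ne_zero]
  ring

lemma one_sub_two_rpow_one_sub_nonneg {d : ℝ} (hd : 1 ≤ d) : 0 ≤ 1 - (2 : ℝ) ^ (1 - d) := by
  linarith [rpow_le_one_of_one_le_of_nonpos one_le_two (by linarith : 1 - d ≤ 0)]

lemma rpow_sq_of_two_mul_eq {y s t : ℝ} (hy : 0 < y) (hst : 2 * s = 1 + t) :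
    (y ^ s) ^ 2 = y * y ^ t := by
  rw [← rpow_natCast, ← rpow_mul hy.le, Nat.cast_ofNat, mul_comm, hst, rpow_add hy, rpow_one]

lemma le_half_add_sqrt {c a L m : ℝ} (hc : 0 ≤ c) (hm : m ^ 2 = c * L) (hLa : L ≤ a) :
    m ≤ 1 / 2 + √(c * a + 1 / 4) := by
  have : m ≤ √(c * a + 1 / 4) :=
    le_sqrt_of_sq_le (by nlinarith [mul_le_mul_of_nonneg_left hLa hc])
  linarith

lemma half_add_sqrt_le {c a U M : ℝ} (hc : 0 ≤ c) (hM0 : 0 ≤ M) (hM : M ^ 2 = 2 * c * U)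
    (hcU : 2 ≤ c * U) (haU : a ≤ U) :
    1 / 2 + √(c * a + 1 / 4) ≤ M := by
  have hM2 : 2 ≤ M := by nlinarith
  have : √(c * a + 1 / 4) ≤ M - 1 / 2 :=
    sqrt_le_iff.2 ⟨by linarith, by nlinarith [mul_le_mul_of_nonneg_left haU hc]⟩
  linarith

lemma alpha_bounds_of_one_le {n : ℕ} (hn : 1 ≤ n) (d : ℕ) (hd : 1 ≤ d) :
    ((2 * n : ℝ)) ^ ((1 : ℝ) - 2 ^ ((1 : ℝ) - d)) ≤ alpha n d ∧
      alpha n d ≤ ((4 * n : ℝ)) ^ ((1 : ℝ) - 2 ^ ((1 : ℝ) - d)) := by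
  have hx : (1 : ℝ) ≤ n := by exact_mod_cast hn
  induction d, hd using Nat.le_induction with
  | base => norm_num [alpha]
  | succ d hd ih =>
    have hexp := two_mul_one_sub_two_rpow_one_sub_succ d
    have he : 0 ≤ 1 - (2 : ℝ) ^ (1 - (d : ℝ)) :=
      one_sub_two_rpow_one_sub_nonneg (by exact_mod_cast hd)
    have hU : 1 ≤ (4 * n : ℝ) ^ (1 - (2 : ℝ) ^ (1 - (d : ℝ))) :=
      one_le_rpow (by linarith) he
    rw [alpha_succ hd]
    push_cast
    constructor
    · exact le_half_add_sqrt (by positivity)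
        (rpow_sq_of_two_mul_eq (by positivity) hexp) ih.1
    · refine half_add_sqrt_le (by positivity) (by positivity) ?_ (by nlinarith) ih.2
      rw [rpow_sq_of_two_mul_eq (by positivity) hexp]
      ring

theorem alpha_bounds (d n : ℕ) (hd : 2 ≤ d) (hn : 1 ≤ n) :
    ((2 * n : ℝ)) ^ ((1 : ℝ) - 2 ^ ((1 : ℝ) - d)) ≤ alpha n d ∧
      alpha n d ≤ ((4 * n : ℝ)) ^ ((1 : ℝ) - 2 ^ ((1 : ℝ) - d)) :=
  alpha_bounds_of_one_le hn d (by omega)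
end

section
/- For every family F ⊆ 2^[n], Σ over nonempty S ⊆ [n] of (1/binom(n,|S|)) · h_{n-|S|}(F_S) equals Σ over pairs (A,B) ∈ F × F with A ⊊ B of 1/multinomial(n; |A|, |B|-|A|, n-|B|), where F_S = {A ∈ F : A ∩ S = ∅ and A ∪ S ∈ F} and h_m(G) = Σ_{A∈G} binom(m,|A|)^{-1}. -/
open Finset

lemma key_fact (n a b : ℕ) (hab : a ≤ b) (hbn : b ≤ n) :
    (1 / (n.choose (b - a) : ℝ)) * (1 / ((n - (b - a)).choose a : ℝ)) =
      ((a.factorial : ℝ) * ((b - a).factorial : ℝ) * ((n - b).factorial : ℝ)) /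
        (n.factorial : ℝ) := by
  have h2 : ((n - (b - a)).choose a) * a.factorial * ((n - (b - a)) - a).factorial
      = (n - (b - a)).factorial := Nat.choose_mul_factorial_mul_factorial (by omega)
  have h1 : (n.choose (b - a)) * (b - a).factorial * (n - (b - a)).factorial
      = n.factorial := Nat.choose_mul_factorial_mul_factorial (by omega)
  have he : (n - (b - a)) - a = n - b := by omega
  rw [he] at h2
  have hN : (n.choose (b - a)) * ((n - (b - a)).choose a) *
      (a.factorial * (b - a).factorial * (n - b).factorial) = n.factorial := by
    calc (n.choose (b - a)) * ((n - (b - a)).choose a) *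
          (a.factorial * (b - a).factorial * (n - b).factorial)
        = (n.choose (b - a)) * (b - a).factorial *
            (((n - (b - a)).choose a) * a.factorial * (n - b).factorial) := by ring
      _ = _ := by rw [h2, h1]
  have hc1 : (0 : ℝ) < n.choose (b - a) := by
    exact_mod_cast Nat.choose_pos (by omega)
  have hc2 : (0 : ℝ) < (n - (b - a)).choose a := by
    exact_mod_cast Nat.choose_pos (by omega)
  have hf : (0 : ℝ) < n.factorial := by exact_mod_cast n.factorial_pos
  have hR : ((n.choose (b - a) : ℝ)) * ((n - (b - a)).choose a : ℝ) *
      ((a.factorial : ℝ) * ((b - a).factorial : ℝ) * ((n - b).factorial : ℝ))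
      = (n.factorial : ℝ) := by exact_mod_cast hN
  field_simp
  nlinarith [hR]

theorem sum_over_S_eq_sum_over_pairs (n : ℕ) (F : Finset (Finset (Fin n))) :
    ∑ S ∈ (Finset.univ : Finset (Fin n)).powerset.filter (fun S => S.Nonempty),
        (1 / (n.choose S.card : ℝ)) *
          ∑ A ∈ F.filter (fun A => Disjoint A S ∧ A ∪ S ∈ F),
            1 / (((n - S.card).choose A.card : ℝ)) =
      ∑ p ∈ (F ×ˢ F).filter (fun p => p.1 ⊂ p.2),
        ((p.1.card.factorial : ℝ) * ((p.2.card - p.1.card).factorial : ℝ) *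
          ((n - p.2.card).factorial : ℝ)) / (n.factorial : ℝ) := by
  simp_rw [Finset.mul_sum]
  rw [Finset.sum_sigma']
  refine Finset.sum_nbij' (fun x => (x.2, x.2 ∪ x.1)) (fun p => ⟨p.2 \ p.1, p.1⟩)
    ?_ ?_ ?_ ?_ ?_
  · rintro ⟨S, A⟩ hx
    simp only [Finset.mem_sigma, Finset.mem_filter, Finset.mem_powerset] at hx
    obtain ⟨⟨-, hSne⟩, hA, hdisj, hAS⟩ := hx
    simp only [Finset.mem_filter, Finset.mem_product]
    refine ⟨⟨hA, hAS⟩, ?_⟩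
    constructor
    · exact Finset.subset_union_left
    · intro hsub
      obtain ⟨x, hxS⟩ := hSne
      have : x ∈ A := hsub (Finset.mem_union_right _ hxS)
      exact (Finset.disjoint_left.mp hdisj this) hxS
  · rintro ⟨A, B⟩ hp
    simp only [Finset.mem_filter, Finset.mem_product] at hp
    obtain ⟨⟨hA, hB⟩, hss⟩ := hp
    simp only [Finset.mem_sigma, Finset.mem_filter, Finset.mem_powerset]
    refine ⟨⟨Finset.subset_univ _, ?_⟩, hA, Finset.disjoint_sdiff, ?_⟩
    · exact Finset.sdiff_nonempty.mpr (fun h => hss.2 h)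
    · rw [Finset.union_sdiff_of_subset hss.subset]
      exact hB
  · rintro ⟨S, A⟩ hx
    simp only [Finset.mem_sigma, Finset.mem_filter, Finset.mem_powerset] at hx
    obtain ⟨⟨-, -⟩, -, hdisj, -⟩ := hx
    simp only
    congr 1
    exact Finset.union_sdiff_cancel_left hdisj
  · rintro ⟨A, B⟩ hp
    simp only [Finset.mem_filter, Finset.mem_product] at hp
    simp only
    rw [Finset.union_sdiff_of_subset hp.2.subset]
  · rintro ⟨S, A⟩ hx
    simp only [Finset.mem_sigma, Finset.mem_filter, Finset.mem_powerset] at hx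
    obtain ⟨⟨-, -⟩, -, hdisj, -⟩ := hx
    have hcard : (A ∪ S).card = A.card + S.card :=
      Finset.card_union_of_disjoint hdisj
    have hb : (A ∪ S).card ≤ n := by
      simpa using Finset.card_le_card (Finset.subset_univ (A ∪ S))
    have hab : A.card ≤ (A ∪ S).card := by omega
    have := key_fact n A.card (A ∪ S).card hab hb
    simp only
    rw [show (A ∪ S).card - A.card = S.card by omega] at this ⊢
    exact this
end

section
/- Let α_d(n) be defined by α_1(n)=1 and α_{d+1}(n) = 1/2 + sqrt(2n·α_d(n)+1/4). If n ≥ d ≥ 1 and F ⊆ 2^[n] satisfies h_n(F) > α_d(n), then F contains a d-dimensional Boolean algebra: pairwise disjoint sets X_0, X_1, ..., X_d ⊆ [n] with X_1, ..., X_d nonempty such that X_0 ∪ ⋃_{i∈I} X_i ∈ F for every I ⊆ {1,...,d}. -/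
/-- The Lubell function of a family of subsets of `[n]`. -/
noncomputable def lubell (n : ℕ) (F : Finset (Finset (Fin n))) : ℝ :=
  ∑ A ∈ F, 1 / (n.choose A.card : ℝ)

/-- `F` contains a `d`-dimensional Boolean algebra: there are pairwise disjoint
`X₀, X₁, …, X_d` with `X₁, …, X_d` nonempty such that every union
`X₀ ∪ ⋃_{i ∈ I} X_i` belongs to `F`. -/
def ContainsBD (n d : ℕ) (F : Finset (Finset (Fin n))) : Prop :=
  ∃ (X₀ : Finset (Fin n)) (X : Fin d → Finset (Fin n)),
    (∀ i, (X i).Nonempty) ∧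
    (∀ i, Disjoint X₀ (X i)) ∧
    (∀ i j, i ≠ j → Disjoint (X i) (X j)) ∧
    ∀ I : Finset (Fin d), X₀ ∪ I.biUnion X ∈ F

open Finset


theorem alpha_nonneg (n d : ℕ) : 0 ≤ alpha n d := by
  match d with
  | 0 => norm_num [alpha]
  | 1 => norm_num [alpha]
  | (d+2) => simp only [alpha]; positivity

theorem alpha_mono (d : ℕ) : ∀ {n n' : ℕ}, n ≤ n' → alpha n d ≤ alpha n' d := by
  induction d with
  | zero => intro n n' _; simp [alpha]
  | succ d ih =>
    intro n n' h
    match d with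
    | 0 => simp [alpha]
    | (d'+1) =>
      simp only [alpha]
      have hsq : 2 * (n:ℝ) * alpha n (d'+1) + 1/4 ≤ 2 * n' * alpha n' (d'+1) + 1/4 := by
        have h1 := alpha_nonneg n (d'+1)
        have h2 : alpha n (d'+1) ≤ alpha n' (d'+1) := ih h
        have h3 : (n:ℝ) ≤ (n':ℝ) := by exact_mod_cast h
        nlinarith [alpha_nonneg n' (d'+1)]
      linarith [Real.sqrt_le_sqrt hsq]

theorem alpha_ge (d n : ℕ) (h : d ≤ n) : (d : ℝ) ≤ alpha n d := by
  induction d with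
  | zero => norm_num [alpha]
  | succ d ih =>
    match d, ih with
    | 0, _ => norm_num [alpha]
    | (d+1), ih =>
      have hih : ((d:ℝ) + 1) ≤ alpha n (d+1) := by
        have := ih (by omega); push_cast at this ⊢; linarith
      have hn : ((d:ℝ) + 2) ≤ (n : ℝ) := by
        have : ((d:ℕ) + 2 : ℕ) ≤ n := h
        exact_mod_cast this
      simp only [alpha]
      push_cast
      have hs : ((d:ℝ) + 3/2) ≤ Real.sqrt (2 * n * alpha n (d+1) + 1/4) := by
        rw [show ((d:ℝ) + 3/2) = Real.sqrt (((d:ℝ)+3/2)^2) by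
          rw [Real.sqrt_sq (by positivity)]]
        apply Real.sqrt_le_sqrt
        nlinarith [alpha_nonneg n (d+1)]
      linarith

/-- Equivalences preserving fibers of `p` and `q` decompose as products of fiber equivalences. -/
def fiberPreservingEquiv {α β K : Type*} [DecidableEq K] (p : α → K) (q : β → K) :
    {e : α ≃ β // ∀ x, q (e x) = p x} ≃ ∀ k, {x // p x = k} ≃ {y // q y = k} where
  toFun e k := Equiv.subtypeEquiv e.1 (fun x => by rw [e.2 x])
  invFun f := ⟨(Equiv.sigmaFiberEquiv p).symm.trans
      ((Equiv.sigmaCongrRight f).trans (Equiv.sigmaFiberEquiv q)),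
    fun x => ((f (p x)) ⟨x, rfl⟩).2⟩
  left_inv e := by
    apply Subtype.ext; apply Equiv.ext; intro x
    rfl
  right_inv f := by
    funext k; apply Equiv.ext; intro x
    rcases x with ⟨x, rfl⟩
    rfl

theorem card_fiberPreserving {α β K : Type*} [Fintype α] [Fintype β] [Fintype K]
    [DecidableEq α] [DecidableEq β] [DecidableEq K] (p : α → K) (q : β → K)
    (h : ∀ k, Fintype.card {x // p x = k} = Fintype.card {y // q y = k}) :
    Fintype.card {e : α ≃ β // ∀ x, q (e x) = p x}
      = ∏ k : K, (Fintype.card {x // p x = k}).factorial := by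
  rw [Fintype.card_congr (fiberPreservingEquiv p q), Fintype.card_pi]
  exact Finset.prod_congr rfl fun k _ =>
    (Fintype.card_equiv (Fintype.equivOfCardEq (h k)))

lemma filter_val_lt_card {m : ℕ} {c : ℕ} (hc : c ≤ m) :
    (univ.filter (fun i : Fin m => (i : ℕ) < c)).card = c := by
  have : univ.filter (fun i : Fin m => (i : ℕ) < c)
      = Finset.map (Fin.castLEEmb hc) univ := by
    ext i
    simp only [mem_filter, mem_univ, true_and, Finset.mem_map, Fin.castLEEmb_apply]
    constructor
    · intro hi; exact ⟨⟨i, hi⟩, by ext; rfl⟩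
    · rintro ⟨j, rfl⟩; exact j.2
  rw [this, Finset.card_map, card_univ, Fintype.card_fin]

def isInit {m : ℕ} (σ : Equiv.Perm (Fin m)) (A : Finset (Fin m)) : Prop :=
  ∀ x, x ∈ A ↔ (σ x : ℕ) < A.card

instance {m : ℕ} (σ : Equiv.Perm (Fin m)) (A : Finset (Fin m)) : Decidable (isInit σ A) := by
  unfold isInit; infer_instance

set_option maxHeartbeats 1000000 in
theorem count_pair {m : ℕ} (A B : Finset (Fin m)) (hAB : A ⊆ B) :
    (univ.filter fun σ : Equiv.Perm (Fin m) => isInit σ A ∧ isInit σ B).card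
      = (A.card).factorial * (B.card - A.card).factorial * (m - B.card).factorial := by
  have hbm : B.card ≤ m := by simpa using B.card_le_univ
  have ham : A.card ≤ B.card := card_le_card hAB
  set a := A.card with ha_def
  set b := B.card with hb_def
  set p : Fin m → Bool × Bool := fun x => (decide (x ∈ A), decide (x ∈ B)) with hp
  set q : Fin m → Bool × Bool := fun i => (decide ((i:ℕ) < a), decide ((i:ℕ) < b)) with hq
  have ptt : Fintype.card {x : Fin m // p x = (true, true)} = a := by
    rw [Fintype.card_subtype]
    have : (univ.filter (fun x : Fin m => p x = (true, true))) = A := by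
      ext x
      simp only [mem_filter, mem_univ, true_and, hp, Prod.mk.injEq, decide_eq_true_eq]
      exact ⟨fun h => h.1, fun h => ⟨h, hAB h⟩⟩
    rw [this]
  have ptf : Fintype.card {x : Fin m // p x = (true, false)} = 0 := by
    rw [Fintype.card_subtype, Finset.card_eq_zero, Finset.filter_eq_empty_iff]
    intro x _
    simp only [hp, Prod.mk.injEq, decide_eq_true_eq, decide_eq_false_iff_not]
    intro ⟨h1, h2⟩; exact h2 (hAB h1)
  have pft : Fintype.card {x : Fin m // p x = (false, true)} = b - a := by
    rw [Fintype.card_subtype]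
    have : (univ.filter (fun x : Fin m => p x = (false, true))) = B \ A := by
      ext x
      simp only [mem_filter, mem_univ, true_and, hp, Prod.mk.injEq,
        decide_eq_true_eq, decide_eq_false_iff_not, mem_sdiff]
      tauto
    rw [this, card_sdiff_of_subset hAB]
  have pff : Fintype.card {x : Fin m // p x = (false, false)} = m - b := by
    rw [Fintype.card_subtype]
    have : (univ.filter (fun x : Fin m => p x = (false, false))) = univ \ B := by
      ext x
      simp only [mem_filter, mem_univ, true_and, hp, Prod.mk.injEq,
        decide_eq_false_iff_not, mem_sdiff]
      tauto
    rw [this, card_sdiff_of_subset (subset_univ B), card_univ, Fintype.card_fin]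
  have qtt : Fintype.card {i : Fin m // q i = (true, true)} = a := by
    rw [Fintype.card_subtype]
    have : (univ.filter (fun i : Fin m => q i = (true, true)))
        = univ.filter (fun i : Fin m => (i:ℕ) < a) := by
      ext i
      simp only [mem_filter, mem_univ, true_and, hq, Prod.mk.injEq, decide_eq_true_eq]
      omega
    rw [this, filter_val_lt_card (ham.trans hbm)]
  have qtf : Fintype.card {i : Fin m // q i = (true, false)} = 0 := by
    rw [Fintype.card_subtype, Finset.card_eq_zero, Finset.filter_eq_empty_iff]
    intro i _
    simp only [hq, Prod.mk.injEq, decide_eq_true_eq, decide_eq_false_iff_not]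
    omega
  have qft : Fintype.card {i : Fin m // q i = (false, true)} = b - a := by
    rw [Fintype.card_subtype]
    have : (univ.filter (fun i : Fin m => q i = (false, true)))
        = univ.filter (fun i : Fin m => (i:ℕ) < b) \ univ.filter (fun i : Fin m => (i:ℕ) < a) := by
      ext i
      simp only [mem_filter, mem_univ, true_and, hq, Prod.mk.injEq,
        decide_eq_true_eq, decide_eq_false_iff_not, mem_sdiff]
      tauto
    rw [this, card_sdiff_of_subset, filter_val_lt_card hbm, filter_val_lt_card (ham.trans hbm)]
    intro i hi
    simp only [mem_filter, mem_univ, true_and] at hi ⊢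
    omega
  have qff : Fintype.card {i : Fin m // q i = (false, false)} = m - b := by
    rw [Fintype.card_subtype]
    have : (univ.filter (fun i : Fin m => q i = (false, false)))
        = univ \ univ.filter (fun i : Fin m => (i:ℕ) < b) := by
      ext i
      simp only [mem_filter, mem_univ, true_and, hq, Prod.mk.injEq,
        decide_eq_false_iff_not, mem_sdiff]
      omega
    rw [this, card_sdiff_of_subset (filter_subset _ _), card_univ, Fintype.card_fin,
      filter_val_lt_card hbm]
  have hfib : ∀ k, Fintype.card {x : Fin m // p x = k} = Fintype.card {i : Fin m // q i = k} := by
    rintro ⟨k1, k2⟩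
    rcases k1 <;> rcases k2 <;> simp only [ptt, ptf, pft, pff, qtt, qtf, qft, qff]
  have key := card_fiberPreserving p q hfib
  have hiff : ∀ σ : Equiv.Perm (Fin m),
      (∀ x, q (σ x) = p x) ↔ (isInit σ A ∧ isInit σ B) := by
    intro σ
    unfold isInit
    rw [← ha_def, ← hb_def, ← forall_and]
    apply forall_congr'
    intro x
    simp only [hp, hq, Prod.mk.injEq, decide_eq_decide]
    tauto
  have lhs_eq : (univ.filter fun σ : Equiv.Perm (Fin m) => isInit σ A ∧ isInit σ B).card
      = Fintype.card {e : Fin m ≃ Fin m // ∀ x, q (e x) = p x} := by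
    rw [Fintype.card_subtype]
    congr 1
    ext σ
    simp only [mem_filter, mem_univ, true_and]
    exact (hiff σ).symm
  have rhs_eq : (∏ k : Bool × Bool, (Fintype.card {x : Fin m // p x = k}).factorial)
      = a.factorial * (b - a).factorial * (m - b).factorial := by
    rw [Fintype.prod_prod_type]
    simp only [Fintype.prod_bool, ptt, ptf, pft, pff, Nat.factorial_zero]
    ring
  rw [lhs_eq]
  convert key.trans rhs_eq using 2

lemma isInit_nested {m : ℕ} {σ : Equiv.Perm (Fin m)} {A B : Finset (Fin m)}
    (hA : isInit σ A) (hB : isInit σ B) (h : A.card ≤ B.card) : A ⊆ B :=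
  fun x hx => (hB x).2 (lt_of_lt_of_le ((hA x).1 hx) h)

lemma count_single {m : ℕ} (A : Finset (Fin m)) :
    (univ.filter fun σ : Equiv.Perm (Fin m) => isInit σ A).card
      = (A.card).factorial * (m - A.card).factorial := by
  have h := count_pair A A (subset_refl A)
  simpa [and_self] using h

lemma nat_fact_id {a b m : ℕ} (hab : a ≤ b) (hbm : b ≤ m) :
    a.factorial * (b - a).factorial * (m - b).factorial
      * (m.choose (b - a) * (m - (b - a)).choose a) = m.factorial := by
  have h1 := Nat.choose_mul_factorial_mul_factorial (show b - a ≤ m by omega)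
  have h2 := Nat.choose_mul_factorial_mul_factorial (show a ≤ m - (b - a) by omega)
  have h3 : m - (b - a) - a = m - b := by omega
  rw [h3] at h2
  rw [← h1, ← h2]
  ring

lemma sum_inv_choose_nonempty (m : ℕ) :
    ∑ S ∈ (univ : Finset (Finset (Fin m))).filter (fun S => S.Nonempty),
      (1:ℝ)/(m.choose S.card) = m := by
  rw [sum_filter, ← Finset.powerset_univ, Finset.sum_powerset]
  have hcu : ((univ : Finset (Fin m)).card) = m := by simp
  rw [hcu]
  have hterm : ∀ j ∈ range (m+1),
      (∑ S ∈ powersetCard j (univ : Finset (Fin m)),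
        if S.Nonempty then (1:ℝ)/(m.choose S.card) else 0)
      = if j = 0 then 0 else 1 := by
    intro j hj
    rcases Nat.eq_zero_or_pos j with rfl | hjpos
    · simp [Finset.powersetCard_zero]
    · have hjm : j ≤ m := by simp at hj; omega
      have : ∀ S ∈ powersetCard j (univ : Finset (Fin m)),
          (if S.Nonempty then (1:ℝ)/(m.choose S.card) else 0) = 1/(m.choose j) := by
        intro S hS
        have hcard : S.card = j := (Finset.mem_powersetCard.1 hS).2
        have : S.Nonempty := Finset.card_pos.1 (by omega)
        simp [this, hcard]
      rw [if_neg (by omega : ¬ j = 0)]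
      rw [Finset.sum_congr rfl this, Finset.sum_const, Finset.card_powersetCard, hcu,
        nsmul_eq_mul]
      have hne : (m.choose j : ℝ) ≠ 0 := by exact_mod_cast (Nat.choose_pos hjm).ne'
      rw [mul_one_div, div_self hne]
  rw [Finset.sum_congr rfl hterm, Finset.sum_range_succ']
  simp

set_option maxHeartbeats 2000000 in
theorem exists_good_S (m : ℕ) (F : Finset (Finset (Fin m))) (a : ℝ)
    (hgt : 2 * m * a < (lubell m F)^2 - lubell m F) :
    ∃ S : Finset (Fin m), S.Nonempty ∧
      a < ∑ A ∈ F.filter (fun A => Disjoint A S ∧ A ∪ S ∈ F),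
            1/(((m - S.card).choose A.card) : ℝ) := by
  classical
  by_contra hcon
  push_neg at hcon
  set lam := lubell m F with hlam
  set M : ℝ := (Nat.factorial m : ℝ) with hM
  have hM0 : (0:ℝ) < M := by rw [hM]; exact_mod_cast Nat.factorial_pos m
  have hcard_le : ∀ A : Finset (Fin m), A.card ≤ m := fun A => by
    simpa using A.card_le_univ
  have hchoose_ne : ∀ A : Finset (Fin m), (m.choose A.card : ℝ) ≠ 0 := fun A => by
    exact_mod_cast (Nat.choose_pos (hcard_le A)).ne'
  set ind : Equiv.Perm (Fin m) → Finset (Fin m) → ℝ :=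
    fun σ A => if isInit σ A then 1 else 0 with hind
  set X : Equiv.Perm (Fin m) → ℝ := fun σ => ∑ A ∈ F, ind σ A with hX
  -- number of permutations
  have hcardperm : ((univ : Finset (Equiv.Perm (Fin m))).card : ℝ) = M := by
    rw [card_univ, Fintype.card_perm, Fintype.card_fin, hM]
  -- single counts
  have count1 : ∀ A : Finset (Fin m), ∑ σ : Equiv.Perm (Fin m), ind σ A
      = M / (m.choose A.card) := by
    intro A
    have hsum : ∑ σ : Equiv.Perm (Fin m), ind σ A
        = ((univ.filter fun σ : Equiv.Perm (Fin m) => isInit σ A).card : ℝ) := by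
      simp [hind, Finset.sum_boole]
    rw [hsum, count_single A, eq_div_iff (hchoose_ne A)]
    have hnat := Nat.choose_mul_factorial_mul_factorial (hcard_le A)
    rw [hM, ← hnat]
    push_cast
    ring
  -- first moment
  have first_moment : ∑ σ : Equiv.Perm (Fin m), X σ = M * lam := by
    rw [hX]
    rw [Finset.sum_comm]
    rw [hlam, lubell, Finset.mul_sum]
    refine Finset.sum_congr rfl fun A _ => ?_
    rw [count1 A]
    rw [div_eq_mul_one_div]
  -- Cauchy-Schwarz
  have CS : (M * lam)^2 ≤ (∑ σ : Equiv.Perm (Fin m), (X σ)^2) * M := by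
    rw [← first_moment]
    have h := Finset.sum_mul_sq_le_sq_mul_sq univ X (fun _ => (1:ℝ))
    simp only [mul_one, one_pow] at h
    have h3 : ∑ _σ : Equiv.Perm (Fin m), (1:ℝ) = M := by
      simp only [Finset.sum_const, nsmul_eq_mul, mul_one]; exact hcardperm
    rwa [h3] at h
  -- expand second moment
  set NR : Finset (Fin m) × Finset (Fin m) → ℝ :=
    fun p => ((univ.filter fun σ : Equiv.Perm (Fin m) =>
      isInit σ p.1 ∧ isInit σ p.2).card : ℝ) with hNR
  have second_moment : ∑ σ : Equiv.Perm (Fin m), (X σ)^2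
      = ∑ p ∈ F ×ˢ F, NR p := by
    have hpt : ∀ p ∈ F ×ˢ F, NR p = ∑ σ : Equiv.Perm (Fin m), ind σ p.1 * ind σ p.2 := by
      intro p _
      have hmul : ∀ σ : Equiv.Perm (Fin m), ind σ p.1 * ind σ p.2
          = if isInit σ p.1 ∧ isInit σ p.2 then (1:ℝ) else 0 := by
        intro σ
        by_cases h1 : isInit σ p.1 <;> by_cases h2 : isInit σ p.2 <;> simp [hind, h1, h2]
      simp only [hmul, Finset.sum_boole, hNR]
    rw [Finset.sum_congr rfl hpt, ← Finset.sum_comm]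
    refine Finset.sum_congr rfl fun σ _ => ?_
    rw [hX, sq, Finset.sum_mul_sum, Finset.sum_product]
  -- pointwise NR formula
  have hNRσ : ∀ p : Finset (Fin m) × Finset (Fin m),
      NR p = ∑ σ : Equiv.Perm (Fin m), ind σ p.1 * ind σ p.2 := by
    intro p
    have hmul : ∀ σ : Equiv.Perm (Fin m), ind σ p.1 * ind σ p.2
        = if isInit σ p.1 ∧ isInit σ p.2 then (1:ℝ) else 0 := by
      intro σ
      by_cases h1 : isInit σ p.1 <;> by_cases h2 : isInit σ p.2 <;> simp [hind, h1, h2]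
    simp only [hmul, Finset.sum_boole, hNR]
  set T1 := (F ×ˢ F).filter (fun p => p.1 ⊂ p.2) with hT1
  set T2 := (F ×ˢ F).filter (fun p => p.2 ⊂ p.1) with hT2
  set T3 := (F ×ˢ F).filter (fun p => p.1 = p.2) with hT3
  have hdiag : ∑ p ∈ T3, NR p = M * lam := by
    have himg : T3 = F.image (fun A => (A, A)) := by
      ext p
      simp only [hT3, Finset.mem_filter, Finset.mem_product, Finset.mem_image]
      constructor
      · rintro ⟨⟨h1, _⟩, h3⟩
        exact ⟨p.1, h1, Prod.ext rfl h3⟩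
      · rintro ⟨A, hA, rfl⟩
        exact ⟨⟨hA, hA⟩, rfl⟩
    rw [himg, Finset.sum_image (fun x _ y _ h => congrArg Prod.fst h)]
    rw [hlam, lubell, Finset.mul_sum]
    refine Finset.sum_congr rfl fun A _ => ?_
    have : NR (A, A) = ∑ σ : Equiv.Perm (Fin m), ind σ A := by
      rw [hNRσ]
      refine Finset.sum_congr rfl fun σ _ => ?_
      by_cases h : isInit σ A <;> simp [hind, h]
    rw [this, count1 A, div_eq_mul_one_div]
  have hvanish : ∀ p ∈ F ×ˢ F, p ∉ T1 ∪ T2 ∪ T3 → NR p = 0 := by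
    intro p hp hpu
    have h1 : ¬ p.1 ⊂ p.2 := fun hss =>
      hpu (Finset.mem_union_left _ (Finset.mem_union_left _ (Finset.mem_filter.2 ⟨hp, hss⟩)))
    have h2 : ¬ p.2 ⊂ p.1 := fun hss =>
      hpu (Finset.mem_union_left _ (Finset.mem_union_right _ (Finset.mem_filter.2 ⟨hp, hss⟩)))
    have h3 : ¬ p.1 = p.2 := fun he =>
      hpu (Finset.mem_union_right _ (Finset.mem_filter.2 ⟨hp, he⟩))
    show ((univ.filter fun σ : Equiv.Perm (Fin m) =>
      isInit σ p.1 ∧ isInit σ p.2).card : ℝ) = 0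
    norm_cast
    rw [Finset.card_eq_zero, Finset.filter_eq_empty_iff]
    intro σ _
    rintro ⟨hi1, hi2⟩
    rcases le_total p.1.card p.2.card with hle | hle
    · have hsub := isInit_nested hi1 hi2 hle
      rcases eq_or_ne p.1 p.2 with he | hne
      · exact h3 he
      · exact h1 (ssubset_of_subset_of_ne hsub hne)
    · have hsub := isInit_nested hi2 hi1 hle
      rcases eq_or_ne p.1 p.2 with he | hne
      · exact h3 he
      · exact h2 (ssubset_of_subset_of_ne hsub (Ne.symm hne))
  have hdisj12 : Disjoint T1 T2 := by
    rw [Finset.disjoint_left]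
    intro p hp1 hp2
    simp only [hT1, hT2, Finset.mem_filter] at hp1 hp2
    exact ssubset_irrefl _ (hp1.2.trans hp2.2)
  have hdisj123 : Disjoint (T1 ∪ T2) T3 := by
    rw [Finset.disjoint_left]
    intro p hp12 hp3
    simp only [hT1, hT2, hT3, Finset.mem_union, Finset.mem_filter] at hp12 hp3
    rcases hp12 with h | h
    · have := h.2; rw [hp3.2] at this; exact ssubset_irrefl _ this
    · have := h.2; rw [hp3.2] at this; exact ssubset_irrefl _ this
  have hsubU : T1 ∪ T2 ∪ T3 ⊆ F ×ˢ F := by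
    intro p hp
    simp only [Finset.mem_union, hT1, hT2, hT3, Finset.mem_filter] at hp
    rcases hp with (h | h) | h <;> exact h.1
  have hsplit : ∑ p ∈ F ×ˢ F, NR p
      = ∑ p ∈ T1, NR p + ∑ p ∈ T2, NR p + M * lam := by
    rw [← Finset.sum_subset hsubU hvanish, Finset.sum_union hdisj123,
      Finset.sum_union hdisj12, hdiag]
  have hNRsymm : ∀ p : Finset (Fin m) × Finset (Fin m), NR (p.2, p.1) = NR p := by
    intro p
    have hfe : (univ.filter fun σ : Equiv.Perm (Fin m) => isInit σ p.2 ∧ isInit σ p.1)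
        = (univ.filter fun σ : Equiv.Perm (Fin m) => isInit σ p.1 ∧ isInit σ p.2) := by
      exact Finset.filter_congr (fun σ _ => and_comm)
    show ((univ.filter fun σ : Equiv.Perm (Fin m) => isInit σ p.2 ∧ isInit σ p.1).card : ℝ)
      = ((univ.filter fun σ : Equiv.Perm (Fin m) => isInit σ p.1 ∧ isInit σ p.2).card : ℝ)
    rw [hfe]
  have hswap : ∑ p ∈ T2, NR p = ∑ p ∈ T1, NR p := by
    refine Finset.sum_bij' (fun p _ => (p.2, p.1)) (fun p _ => (p.2, p.1)) ?_ ?_ ?_ ?_ ?_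
    · intro p hp
      simp only [hT1, hT2, Finset.mem_filter, Finset.mem_product] at hp ⊢
      exact ⟨⟨hp.1.2, hp.1.1⟩, hp.2⟩
    · intro p hp
      simp only [hT1, hT2, Finset.mem_filter, Finset.mem_product] at hp ⊢
      exact ⟨⟨hp.1.2, hp.1.1⟩, hp.2⟩
    · intro p _; rfl
    · intro p _; rfl
    · intro p _; exact (hNRsymm p).symm
  set W := ∑ p ∈ T1, NR p with hW
  have hW_ge : M * (lam^2 - lam) ≤ 2 * W := by
    have h1 : ∑ σ : Equiv.Perm (Fin m), (X σ)^2 = 2 * W + M * lam := by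
      rw [second_moment, hsplit, hswap]; ring
    rw [h1] at CS
    have h2 : M * (M * (lam ^ 2 - lam)) ≤ M * (2 * W) := by nlinarith [CS]
    exact le_of_mul_le_mul_left h2 hM0
  -- value of NR on strict pairs
  set g : Finset (Fin m) × Finset (Fin m) → ℝ := fun p =>
    (1:ℝ)/(m.choose (p.2 \ p.1).card) * (1/((m - (p.2 \ p.1).card).choose p.1.card)) with hg
  have hchoose2_ne : ∀ p : Finset (Fin m) × Finset (Fin m), p.1 ⊆ p.2 →
      ((m.choose (p.2 \ p.1).card : ℝ) ≠ 0 ∧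
        (((m - (p.2 \ p.1).card).choose p.1.card : ℝ)) ≠ 0) := by
    intro p hsub
    have hsd : (p.2 \ p.1).card = p.2.card - p.1.card := Finset.card_sdiff_of_subset hsub
    have h2m : p.2.card ≤ m := hcard_le p.2
    have h12 : p.1.card ≤ p.2.card := Finset.card_le_card hsub
    constructor
    · exact_mod_cast (Nat.choose_pos (by omega)).ne'
    · exact_mod_cast (Nat.choose_pos (by omega : p.1.card ≤ m - (p.2 \ p.1).card)).ne'
  have hNR_T1 : ∀ p ∈ T1, NR p = M * g p := by
    intro p hp
    rw [hT1, Finset.mem_filter] at hp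
    have hsub : p.1 ⊆ p.2 := hp.2.subset
    have hsd : (p.2 \ p.1).card = p.2.card - p.1.card := Finset.card_sdiff_of_subset hsub
    obtain ⟨hc1, hc2⟩ := hchoose2_ne p hsub
    show ((univ.filter fun σ : Equiv.Perm (Fin m) =>
      isInit σ p.1 ∧ isInit σ p.2).card : ℝ) = M * g p
    rw [count_pair p.1 p.2 hsub, hg]
    have hfact := nat_fact_id (Finset.card_le_card hsub) (hcard_le p.2)
    field_simp
    rw [hM, ← hfact, hsd]
    push_cast
    ring
  have hWg : W = M * ∑ p ∈ T1, g p := by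
    rw [hW, Finset.mul_sum]
    exact Finset.sum_congr rfl hNR_T1
  -- reindex over (S, A)
  set SS := (univ : Finset (Finset (Fin m))).filter (fun S => S.Nonempty) with hSS
  set FS : Finset (Fin m) → Finset (Finset (Fin m)) :=
    fun S => F.filter (fun A => Disjoint A S ∧ A ∪ S ∈ F) with hFS
  have hsig : ∑ p ∈ T1, g p
      = ∑ x ∈ SS.sigma FS, (1:ℝ)/(m.choose x.1.card) * (1/((m - x.1.card).choose x.2.card)) := by
    refine Finset.sum_bij' (fun p _ => (⟨p.2 \ p.1, p.1⟩ : Σ _ : Finset (Fin m), Finset (Fin m)))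
      (fun x _ => (x.2, x.2 ∪ x.1)) ?_ ?_ ?_ ?_ ?_
    · intro p hp
      rw [hT1, Finset.mem_filter, Finset.mem_product] at hp
      obtain ⟨⟨h1F, h2F⟩, hss⟩ := hp
      rw [Finset.mem_sigma]
      refine ⟨?_, ?_⟩
      · rw [hSS, Finset.mem_filter]
        obtain ⟨x, hx⟩ := Finset.exists_of_ssubset hss
        exact ⟨Finset.mem_univ _, ⟨x, Finset.mem_sdiff.2 ⟨hx.1, hx.2⟩⟩⟩
      · rw [hFS, Finset.mem_filter]
        refine ⟨h1F, Finset.disjoint_sdiff, ?_⟩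
        rw [Finset.union_sdiff_of_subset hss.subset]
        exact h2F
    · rintro ⟨S, A⟩ hx
      rw [Finset.mem_sigma, hSS, hFS, Finset.mem_filter, Finset.mem_filter] at hx
      obtain ⟨⟨_, hSne⟩, hAF, hdisj, hUF⟩ := hx
      rw [hT1, Finset.mem_filter, Finset.mem_product]
      refine ⟨⟨hAF, hUF⟩, ?_⟩
      refine Finset.ssubset_iff_subset_ne.2 ⟨Finset.subset_union_left, ?_⟩
      intro he
      dsimp only at he
      obtain ⟨y, hy⟩ := hSne
      have hyA : y ∈ A := by
        have h3 : y ∈ A ∪ S := Finset.mem_union_right _ hy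
        rwa [← he] at h3
      exact (Finset.disjoint_left.1 hdisj hyA) hy
    · intro p hp
      rw [hT1, Finset.mem_filter] at hp
      have h2 : p.1 ∪ p.2 \ p.1 = p.2 := Finset.union_sdiff_of_subset hp.2.subset
      dsimp only
      exact Prod.ext rfl h2
    · rintro ⟨S, A⟩ hx
      rw [Finset.mem_sigma, hSS, hFS, Finset.mem_filter, Finset.mem_filter] at hx
      obtain ⟨⟨_, hSne⟩, _, hdisj, _⟩ := hx
      have h2 : (A ∪ S) \ A = S := Finset.union_sdiff_cancel_left hdisj
      dsimp only
      rw [h2]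
    · intro p _
      rw [hg]
  have hbound : ∑ x ∈ SS.sigma FS,
      (1:ℝ)/(m.choose x.1.card) * (1/((m - x.1.card).choose x.2.card)) ≤ a * m := by
    rw [Finset.sum_sigma]
    have hfac : ∀ S ∈ SS,
        (∑ A ∈ FS S, (1:ℝ)/(m.choose S.card) * (1/((m - S.card).choose A.card)))
        = (1/(m.choose S.card)) * ∑ A ∈ FS S, 1/(((m - S.card).choose A.card) : ℝ) := by
      intro S _
      rw [Finset.mul_sum]
    rw [Finset.sum_congr rfl hfac]
    have hstep : ∀ S ∈ SS,
        (1/(m.choose S.card : ℝ)) * ∑ A ∈ FS S, 1/(((m - S.card).choose A.card) : ℝ)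
          ≤ (1/(m.choose S.card : ℝ)) * a := by
      intro S hS
      rw [hSS, Finset.mem_filter] at hS
      have hSne := hS.2
      have := hcon S hSne
      apply mul_le_mul_of_nonneg_left _ (by positivity)
      exact this
    calc ∑ S ∈ SS, (1/(m.choose S.card : ℝ)) * ∑ A ∈ FS S, 1/(((m - S.card).choose A.card) : ℝ)
        ≤ ∑ S ∈ SS, (1/(m.choose S.card : ℝ)) * a := Finset.sum_le_sum hstep
      _ = a * ∑ S ∈ SS, (1:ℝ)/(m.choose S.card) := by rw [← Finset.sum_mul]; ring
      _ = a * m := by rw [hSS, sum_inv_choose_nonempty]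
  have h1 : ∑ p ∈ T1, g p ≤ a * m := by rw [hsig]; exact hbound
  have h2 : M * (lam^2 - lam) ≤ 2 * (M * (a * m)) := by
    refine hW_ge.trans ?_
    rw [hWg]
    have := mul_le_mul_of_nonneg_left h1 (le_of_lt hM0)
    linarith
  nlinarith [mul_lt_mul_of_pos_left hgt hM0, h2]

/-- sum of 1/choose over a powerset -/
lemma sum_inv_choose_powerset {γ : Type*} [DecidableEq γ] (C : Finset γ) :
    ∑ A ∈ C.powerset, (1:ℝ)/((C.card.choose A.card) : ℝ) = C.card + 1 := by
  rw [Finset.sum_powerset]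
  have hterm : ∀ j ∈ range (C.card + 1),
      (∑ A ∈ powersetCard j C, (1:ℝ)/((C.card.choose A.card) : ℝ)) = 1 := by
    intro j hj
    have hjm : j ≤ C.card := by simp at hj; omega
    have hval : ∀ A ∈ powersetCard j C,
        (1:ℝ)/((C.card.choose A.card) : ℝ) = 1/(C.card.choose j) := by
      intro A hA
      rw [(Finset.mem_powersetCard.1 hA).2]
    rw [Finset.sum_congr rfl hval, Finset.sum_const, Finset.card_powersetCard,
      nsmul_eq_mul]
    have hne : ((C.card.choose j : ℕ) : ℝ) ≠ 0 := by
      exact_mod_cast (Nat.choose_pos hjm).ne'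
    rw [mul_one_div, div_self hne]
  rw [Finset.sum_congr rfl hterm, Finset.sum_const, Finset.card_range, nsmul_eq_mul,
    mul_one]
  push_cast
  ring

lemma perm_first_moment (m : ℕ) (F : Finset (Finset (Fin m))) :
    ∑ σ : Equiv.Perm (Fin m), ((F.filter (fun A => isInit σ A)).card : ℝ)
      = (m.factorial : ℝ) * lubell m F := by
  have hcard_le : ∀ A : Finset (Fin m), A.card ≤ m := fun A => by
    simpa using A.card_le_univ
  have step1 : ∀ σ : Equiv.Perm (Fin m),
      ((F.filter (fun A => isInit σ A)).card : ℝ)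
        = ∑ A ∈ F, (if isInit σ A then (1:ℝ) else 0) := by
    intro σ; rw [Finset.sum_boole]
  simp only [step1]
  rw [Finset.sum_comm]
  rw [lubell, Finset.mul_sum]
  refine Finset.sum_congr rfl fun A _ => ?_
  rw [Finset.sum_boole, count_single A]
  have hne : ((m.choose A.card : ℕ) : ℝ) ≠ 0 := by
    exact_mod_cast (Nat.choose_pos (hcard_le A)).ne'
  rw [mul_one_div, eq_div_iff hne]
  have hnat := Nat.choose_mul_factorial_mul_factorial (hcard_le A)
  rw [← hnat]
  push_cast
  ring

lemma bd_of_pair {m : ℕ} {F : Finset (Finset (Fin m))} {A B : Finset (Fin m)}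
    (hA : A ∈ F) (hB : B ∈ F) (hss : A ⊂ B) : ContainsBD m 1 F := by
  refine ⟨A, fun _ => B \ A, ?_, ?_, ?_, ?_⟩
  · intro i
    obtain ⟨x, hx⟩ := Finset.exists_of_ssubset hss
    exact ⟨x, Finset.mem_sdiff.2 ⟨hx.1, hx.2⟩⟩
  · intro i; exact Finset.disjoint_sdiff
  · intro i j hij; exact absurd (Subsingleton.elim i j) hij
  · intro I
    rcases Finset.eq_empty_or_nonempty I with rfl | hne
    · simpa using hA
    · obtain ⟨i, hi⟩ := hne
      have hIi : I = {i} := by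
        ext j
        simp only [Finset.mem_singleton]
        exact ⟨fun _ => Subsingleton.elim j i, fun h => h ▸ hi⟩
      rw [hIi, Finset.singleton_biUnion, Finset.union_sdiff_of_subset hss.subset]
      exact hB

theorem base_case (m : ℕ) (F : Finset (Finset (Fin m))) (h : 1 < lubell m F) :
    ContainsBD m 1 F := by
  have hM0 : (0:ℝ) < (m.factorial : ℝ) := by exact_mod_cast Nat.factorial_pos m
  have hlt : ∑ _σ : Equiv.Perm (Fin m), (1:ℝ)
      < ∑ σ : Equiv.Perm (Fin m), ((F.filter (fun A => isInit σ A)).card : ℝ) := by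
    rw [perm_first_moment]
    have hcount : ∑ _σ : Equiv.Perm (Fin m), (1:ℝ) = (m.factorial : ℝ) := by
      rw [Finset.sum_const, nsmul_eq_mul, mul_one, card_univ, Fintype.card_perm,
        Fintype.card_fin]
    rw [hcount]
    nlinarith
  obtain ⟨σ, _, hσ⟩ := Finset.exists_lt_of_sum_lt hlt
  have h2 : 1 < (F.filter (fun A => isInit σ A)).card := by exact_mod_cast hσ
  obtain ⟨A, hA, B, hB, hne⟩ := Finset.one_lt_card.1 h2
  rw [Finset.mem_filter] at hA hB
  rcases le_total A.card B.card with hle | hle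
  · exact bd_of_pair hA.1 hB.1
      (ssubset_of_subset_of_ne (isInit_nested hA.2 hB.2 hle) hne)
  · exact bd_of_pair hB.1 hA.1
      (ssubset_of_subset_of_ne (isInit_nested hB.2 hA.2 hle) (Ne.symm hne))

lemma pullback_BD {m k e : ℕ} (C : Finset (Fin m)) (hCk : C.card = k)
    (G : Finset (Finset (Fin m))) (hGC : ∀ A ∈ G, A ⊆ C)
    (hsum : alpha k e < ∑ A ∈ G, 1/((k.choose A.card) : ℝ))
    (IH : ∀ (F' : Finset (Finset (Fin k))), alpha k e < lubell k F' → ContainsBD k e F') :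
    ∃ (X₀ : Finset (Fin m)) (X : Fin e → Finset (Fin m)),
      (∀ i, (X i).Nonempty) ∧ (∀ i, Disjoint X₀ (X i)) ∧
      (∀ i j, i ≠ j → Disjoint (X i) (X j)) ∧
      (∀ I : Finset (Fin e), X₀ ∪ I.biUnion X ∈ G) ∧
      X₀ ⊆ C ∧ (∀ i, X i ⊆ C) := by
  classical
  have eqv : {x // x ∈ C} ≃ Fin k := C.equivFin.trans (finCongr hCk)
  set g : Fin k → Fin m := fun i => (eqv.symm i : Fin m) with hgdef
  have hg_inj : Function.Injective g := by
    intro i j hij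
    exact eqv.symm.injective (Subtype.val_injective hij)
  have hg_mem : ∀ i, g i ∈ C := fun i => (eqv.symm i).2
  have hg_surj : ∀ x ∈ C, ∃ i, g i = x := by
    intro x hx
    exact ⟨eqv ⟨x, hx⟩, by rw [hgdef]; simp⟩
  set down : Finset (Fin m) → Finset (Fin k) :=
    fun A => univ.filter (fun i => g i ∈ A) with hdown
  set up : Finset (Fin k) → Finset (Fin m) := fun T => T.image g with hup
  have f2 : ∀ T, down (up T) = T := by
    intro T
    ext i
    simp only [hdown, hup, Finset.mem_filter, Finset.mem_univ, true_and,
      Finset.mem_image]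
    constructor
    · rintro ⟨j, hj, hgj⟩
      rwa [← hg_inj hgj]
    · intro hi; exact ⟨i, hi, rfl⟩
  have f1 : ∀ A, A ⊆ C → up (down A) = A := by
    intro A hAC
    ext x
    simp only [hup, hdown, Finset.mem_image, Finset.mem_filter, Finset.mem_univ,
      true_and]
    constructor
    · rintro ⟨i, hi, rfl⟩; exact hi
    · intro hx
      obtain ⟨i, rfl⟩ := hg_surj x (hAC hx)
      exact ⟨i, hx, rfl⟩
  have fcard : ∀ A, A ⊆ C → (down A).card = A.card := by
    intro A hAC
    conv_rhs => rw [← f1 A hAC]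
    rw [hup, Finset.card_image_of_injective _ hg_inj]
  have fup_sub : ∀ T, up T ⊆ C := by
    intro T x hx
    rw [hup, Finset.mem_image] at hx
    obtain ⟨i, _, rfl⟩ := hx
    exact hg_mem i
  have hdown_injG : ∀ A ∈ G, ∀ B ∈ G, down A = down B → A = B := by
    intro A hA B hB hAB
    rw [← f1 A (hGC A hA), ← f1 B (hGC B hB), hAB]
  set F' := G.image down with hF'
  have hlub : lubell k F' = ∑ A ∈ G, 1/((k.choose A.card) : ℝ) := by
    rw [hF', lubell, Finset.sum_image hdown_injG]
    exact Finset.sum_congr rfl fun A hA => by rw [fcard A (hGC A hA)]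
  obtain ⟨X₀', X', hne', hd0', hdp', hmem'⟩ := IH F' (by rw [hlub]; exact hsum)
  have hupG : ∀ T, T ∈ F' → up T ∈ G := by
    intro T hT
    rw [hF', Finset.mem_image] at hT
    obtain ⟨A, hA, rfl⟩ := hT
    rwa [f1 A (hGC A hA)]
  refine ⟨up X₀', fun i => up (X' i), ?_, ?_, ?_, ?_, fup_sub _, fun i => fup_sub _⟩
  · intro i; exact (hne' i).image g
  · intro i; exact (Finset.disjoint_image hg_inj).2 (hd0' i)
  · intro i j hij; exact (Finset.disjoint_image hg_inj).2 (hdp' i j hij)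
  · intro I
    have : up X₀' ∪ I.biUnion (fun i => up (X' i)) = up (X₀' ∪ I.biUnion X') := by
      rw [hup]
      dsimp only
      rw [Finset.image_union]
      congr 1
      ext x
      simp only [Finset.mem_biUnion, Finset.mem_image]
      constructor
      · rintro ⟨i, hi, j, hj, rfl⟩; exact ⟨j, ⟨i, hi, hj⟩, rfl⟩
      · rintro ⟨j, ⟨i, hi, hj⟩, rfl⟩; exact ⟨i, hi, j, hj, rfl⟩
    rw [this]
    exact hupG _ (hmem' I)

theorem turan_main : ∀ d, 1 ≤ d → ∀ m, d ≤ m → ∀ (F : Finset (Finset (Fin m))),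
    alpha m d < lubell m F → ContainsBD m d F := by
  intro d
  induction d with
  | zero => omega
  | succ e ih =>
    intro _ m hdm F hlt
    rcases Nat.eq_zero_or_pos e with rfl | hepos
    · exact base_case m F (by simpa [alpha] using hlt)
    obtain ⟨e', rfl⟩ : ∃ e', e = e' + 1 := ⟨e - 1, by omega⟩
    set lam := lubell m F with hlam
    have hunfold : alpha m (e' + 2)
        = 1 / 2 + Real.sqrt (2 * m * alpha m (e' + 1) + 1 / 4) := by
      simp [alpha]
    have h0 : (0:ℝ) ≤ 2 * m * alpha m (e' + 1) + 1 / 4 := by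
      have := alpha_nonneg m (e' + 1)
      positivity
    have hquad : 2 * m * alpha m (e' + 1) < lam ^ 2 - lam := by
      rw [hunfold] at hlt
      have hs := Real.sqrt_nonneg (2 * m * alpha m (e' + 1) + 1 / 4)
      have hsq := Real.sq_sqrt h0
      nlinarith
    obtain ⟨S, hSne, hS⟩ := exists_good_S m F (alpha m (e' + 1)) hquad
    set G := F.filter (fun A => Disjoint A S ∧ A ∪ S ∈ F) with hG
    set C := Sᶜ with hC
    set k := C.card with hk
    have hkm : k = m - S.card := by
      rw [hk, hC, Finset.card_compl, Fintype.card_fin]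
    have hGC : ∀ A ∈ G, A ⊆ C := by
      intro A hA x hx
      rw [hG, Finset.mem_filter] at hA
      rw [hC, Finset.mem_compl]
      exact Finset.disjoint_left.1 hA.2.1 hx
    have hkm' : k ≤ m := by
      rw [hk]
      simpa using C.card_le_univ
    have hem : e' + 1 ≤ m := by omega
    -- dispatch the degenerate case k < e'+1
    by_cases hke : e' + 1 ≤ k
    · -- main case
      have hsum : alpha k (e' + 1) < ∑ A ∈ G, 1/((k.choose A.card) : ℝ) := by
        have h1 : alpha k (e' + 1) ≤ alpha m (e' + 1) := alpha_mono _ hkm'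
        have h2 : ∑ A ∈ G, 1/(((m - S.card).choose A.card) : ℝ)
            = ∑ A ∈ G, 1/((k.choose A.card) : ℝ) := by
          rw [hkm]
        rw [← h2]
        exact lt_of_le_of_lt h1 hS
      obtain ⟨X₀, X, hne, hd0, hdp, hmemG, hX₀C, hXC⟩ :=
        pullback_BD C rfl G hGC hsum (fun F' h' => ih hepos k hke F' h')
      refine ⟨X₀, Fin.snoc X S, ?_, ?_, ?_, ?_⟩
      · intro i
        refine Fin.lastCases ?_ ?_ i
        · rw [Fin.snoc_last]; exact hSne
        · intro j; rw [Fin.snoc_castSucc]; exact hne j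
      · intro i
        refine Fin.lastCases ?_ ?_ i
        · rw [Fin.snoc_last]
          rw [Finset.disjoint_left]
          intro x hx
          have := hX₀C hx
          rw [hC, Finset.mem_compl] at this
          exact this
        · intro j; rw [Fin.snoc_castSucc]; exact hd0 j
      · intro i j hij
        have hXS : ∀ j', Disjoint (X j') S := by
          intro j'
          rw [Finset.disjoint_left]
          intro x hx
          have := hXC j' hx
          rw [hC, Finset.mem_compl] at this
          exact this
        rcases Fin.eq_castSucc_or_eq_last i with ⟨i', rfl⟩ | rfl
        · rcases Fin.eq_castSucc_or_eq_last j with ⟨j', rfl⟩ | rfl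
          · rw [Fin.snoc_castSucc, Fin.snoc_castSucc]
            exact hdp i' j' (fun h => hij (by rw [h]))
          · rw [Fin.snoc_castSucc, Fin.snoc_last]
            exact hXS i'
        · rcases Fin.eq_castSucc_or_eq_last j with ⟨j', rfl⟩ | rfl
          · rw [Fin.snoc_last, Fin.snoc_castSucc]
            exact (hXS j').symm
          · exact absurd rfl hij
      · intro I
        set I' := I.preimage Fin.castSucc (Fin.castSucc_injective _).injOn with hI'
        have hcore : X₀ ∪ I'.biUnion X ∈ G := hmemG I'
        rw [hG, Finset.mem_filter] at hcore
        by_cases hlast : Fin.last (e' + 1) ∈ I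
        · have hdecomp : X₀ ∪ I.biUnion (Fin.snoc X S)
              = (X₀ ∪ I'.biUnion X) ∪ S := by
            ext x
            simp only [Finset.mem_union, Finset.mem_biUnion, hI', Finset.mem_preimage]
            constructor
            · rintro (hx | ⟨i, hi, hx⟩)
              · exact Or.inl (Or.inl hx)
              · refine Fin.lastCases ?_ ?_ i hi hx
                · intro hi hx
                  rw [Fin.snoc_last] at hx
                  exact Or.inr hx
                · intro j hj hx
                  rw [Fin.snoc_castSucc] at hx
                  exact Or.inl (Or.inr ⟨j, hj, hx⟩)
            · rintro ((hx | ⟨j, hj, hx⟩) | hx)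
              · exact Or.inl hx
              · exact Or.inr ⟨Fin.castSucc j, hj, by rwa [Fin.snoc_castSucc]⟩
              · exact Or.inr ⟨Fin.last _, hlast, by rwa [Fin.snoc_last]⟩
          rw [hdecomp]
          exact hcore.2.2
        · have hdecomp : X₀ ∪ I.biUnion (Fin.snoc X S)
              = X₀ ∪ I'.biUnion X := by
            ext x
            simp only [Finset.mem_union, Finset.mem_biUnion, hI', Finset.mem_preimage]
            constructor
            · rintro (hx | ⟨i, hi, hx⟩)
              · exact Or.inl hx
              · refine Fin.lastCases ?_ ?_ i hi hx
                · intro hi hx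
                  exact absurd hi hlast
                · intro j hj hx
                  rw [Fin.snoc_castSucc] at hx
                  exact Or.inr ⟨j, hj, hx⟩
            · rintro (hx | ⟨j, hj, hx⟩)
              · exact Or.inl hx
              · exact Or.inr ⟨Fin.castSucc j, hj, by rwa [Fin.snoc_castSucc]⟩
          rw [hdecomp]
          exact hcore.1
    · -- degenerate case: k < e'+1, contradiction
      exfalso
      have hGsub : G ⊆ C.powerset := by
        intro A hA
        rw [Finset.mem_powerset]
        exact hGC A hA
      have hble : ∑ A ∈ G, 1/(((m - S.card).choose A.card) : ℝ)
          ≤ ∑ A ∈ C.powerset, 1/(((m - S.card).choose A.card) : ℝ) := by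
        refine Finset.sum_le_sum_of_subset_of_nonneg hGsub ?_
        intro A _ _
        positivity
      have hpow : ∑ A ∈ C.powerset, 1/(((m - S.card).choose A.card) : ℝ) = k + 1 := by
        rw [← hkm]
        exact_mod_cast sum_inv_choose_powerset C
      have halpha_ge : ((e' : ℝ) + 1) ≤ alpha m (e' + 1) := by
        have := alpha_ge (e' + 1) m hem
        push_cast at this ⊢
        linarith
      have hkle : (k:ℝ) + 1 ≤ (e':ℝ) + 1 := by
        have hke2 : k ≤ e' := by omega
        have := (Nat.cast_le (α := ℝ)).2 hke2
        linarith
      linarith [hS, hble, hpow, halpha_ge]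


theorem turan_boolean_algebra (n d : ℕ) (hd : 1 ≤ d) (hn : d ≤ n)
    (F : Finset (Finset (Fin n))) (h : alpha n d < lubell n F) :
    ContainsBD n d F :=
  turan_main d hd n hn F h
end

section
/- For n = 2s, every red-blue coloring of 2^[n] contains either a red s-dimensional Boolean algebra or a blue pair A ⊊ B (a blue copy of B_1). That is, R(B_s, B_1) ≤ 2s. -/
/-- The coloring `c` admits a `d`-dimensional Boolean algebra all of whose members
receive the color `col`. -/
def HasColoredBD {α : Type*} (n d : ℕ) (c : Finset (Fin n) → α) (col : α) : Prop :=
  ∃ (X₀ : Finset (Fin n)) (X : Fin d → Finset (Fin n)),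
    (∀ i, (X i).Nonempty) ∧
    (∀ i, Disjoint X₀ (X i)) ∧
    (∀ i j, i ≠ j → Disjoint (X i) (X j)) ∧
    ∀ I : Finset (Fin d), c (X₀ ∪ I.biUnion X) = col

/-- `R(B_s, B_1) ≤ 2s`: every red–blue coloring of `2^[2s]` contains a red copy of
`B_s` (red = `true`) or a blue pair `A ⊊ B` (blue = `false`). -/
theorem ramsey_Bs_B1_upper (s : ℕ) (hs : 1 ≤ s) (c : Finset (Fin (2 * s)) → Bool) :
    HasColoredBD (2 * s) s c true ∨
      ∃ A B : Finset (Fin (2 * s)), A ⊂ B ∧ c A = false ∧ c B = false := by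
  by_cases hpair : ∃ A B : Finset (Fin (2 * s)), A ⊂ B ∧ c A = false ∧ c B = false
  · exact Or.inr hpair
  left
  push_neg at hpair
  -- `hpair : ∀ A B, A ⊂ B → c A = false → c B ≠ false`
  by_cases hmid : ∀ T : Finset (Fin (2 * s)), c T = false → T.card = s
  · -- Case C : every blue set lies on the middle level `s`.
    -- Use `X₀ = ∅`, singletons `{0},…,{s-2}` and the big block `{s-1,…,2s-1}`.
    set X : Fin s → Finset (Fin (2 * s)) :=
      fun i => Finset.univ.filter (fun x => min x.val (s - 1) = i.val) with hX
    refine ⟨∅, X, ?_, ?_, ?_, ?_⟩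
    · intro i
      refine ⟨⟨i.val, by omega⟩, ?_⟩
      simp only [hX, Finset.mem_filter, Finset.mem_univ, true_and]
      have := i.isLt
      omega
    · intro i; simp
    · intro i j hij
      rw [Finset.disjoint_left]
      intro x hx hx'
      simp only [hX, Finset.mem_filter, Finset.mem_univ, true_and] at hx hx'
      exact hij (Fin.ext (hx ▸ hx'))
    · intro I
      rw [Finset.empty_union]
      by_contra hc
      have hfalse : c (I.biUnion X) = false := by
        cases h' : c (I.biUnion X)
        · rfl
        · exact absurd h' hc
      have hcard := hmid _ hfalse
      set last : Fin s := ⟨s - 1, by omega⟩ with hlastdef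
      by_cases hl : last ∈ I
      · -- the union contains the big block, so it has more than `s` elements
        have hsub : X last ⊆ I.biUnion X := Finset.subset_biUnion_of_mem X hl
        have hbig : s + 1 ≤ (X last).card := by
          have hinj : Function.Injective (fun j : Fin (s + 1) =>
              (⟨s - 1 + j.val, by omega⟩ : Fin (2 * s))) := by
            intro a b hab
            have : s - 1 + a.val = s - 1 + b.val := congrArg Fin.val hab
            exact Fin.ext (by omega)
          have himg : (Finset.univ.image (fun j : Fin (s + 1) =>
              (⟨s - 1 + j.val, by omega⟩ : Fin (2 * s)))) ⊆ X last := by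
            intro x hx
            simp only [Finset.mem_image, Finset.mem_univ, true_and] at hx
            obtain ⟨j, rfl⟩ := hx
            simp only [hX, Finset.mem_filter, Finset.mem_univ, true_and]
            have h1 : (⟨s - 1 + j.val, by omega⟩ : Fin (2 * s)).val = s - 1 + j.val := rfl
            have h2 : last.val = s - 1 := rfl
            omega
          calc s + 1 = (Finset.univ.image (fun j : Fin (s + 1) =>
                (⟨s - 1 + j.val, by omega⟩ : Fin (2 * s)))).card := by
                rw [Finset.card_image_of_injective _ hinj, Finset.card_univ, Fintype.card_fin]
            _ ≤ (X last).card := Finset.card_le_card himg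
        have := Finset.card_le_card hsub
        omega
      · -- all parts are singletons below `s-1`, so the union has fewer than `s` elements
        have hsmall : I.biUnion X ⊆ Finset.univ.image
            (fun j : Fin (s - 1) => (⟨j.val, by omega⟩ : Fin (2 * s))) := by
          intro x hx
          rw [Finset.mem_biUnion] at hx
          obtain ⟨i, hiI, hxi⟩ := hx
          simp only [hX, Finset.mem_filter, Finset.mem_univ, true_and] at hxi
          have hine : i ≠ last := fun h => hl (h ▸ hiI)
          have hiv : i.val ≠ s - 1 := by
            intro h; exact hine (Fin.ext (by simp [hlastdef, h]))
          have hilt := i.isLt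
          have hxval : x.val < s - 1 := by omega
          simp only [Finset.mem_image, Finset.mem_univ, true_and]
          exact ⟨⟨x.val, hxval⟩, Fin.ext rfl⟩
        have h1 : (I.biUnion X).card ≤ s - 1 := by
          calc (I.biUnion X).card ≤ _ := Finset.card_le_card hsmall
            _ ≤ (Finset.univ : Finset (Fin (s - 1))).card := Finset.card_image_le
            _ = s - 1 := by rw [Finset.card_univ, Fintype.card_fin]
        omega
  · push_neg at hmid
    obtain ⟨T, hT, hTs⟩ := hmid
    rcases lt_or_gt_of_ne hTs with hlt | hgt
    · -- Case A : a blue set `T` with `|T| < s`; build a red cube strictly above `T`.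
      have hTc : (Tᶜ : Finset (Fin (2 * s))).Nonempty := by
        rw [← Finset.card_pos, Finset.card_compl, Fintype.card_fin]
        omega
      obtain ⟨t, ht⟩ := hTc
      rw [Finset.mem_compl] at ht
      set X₀ : Finset (Fin (2 * s)) := insert t T with hX₀
      have hX₀card : X₀.card = T.card + 1 := Finset.card_insert_of_notMem ht
      have hcompl : s ≤ (X₀ᶜ : Finset (Fin (2 * s))).card := by
        rw [Finset.card_compl, Fintype.card_fin, hX₀card]; omega
      obtain ⟨S, hSsub, hScard⟩ := Finset.exists_subset_card_eq hcompl
      set e := S.orderIsoOfFin hScard with he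
      refine ⟨X₀, fun i => {(e i : Fin (2 * s))}, fun i => ⟨_, Finset.mem_singleton_self _⟩,
        ?_, ?_, ?_⟩
      · intro i
        rw [Finset.disjoint_singleton_right]
        intro hmem
        have : (e i : Fin (2 * s)) ∈ X₀ᶜ := hSsub (e i).2
        rw [Finset.mem_compl] at this
        exact this hmem
      · intro i j hij
        rw [Finset.disjoint_singleton_left, Finset.mem_singleton]
        intro h
        exact hij (e.injective (Subtype.ext h))
      · intro I
        have hssub : T ⊂ X₀ ∪ I.biUnion (fun i => {(e i : Fin (2 * s))}) := by
          constructor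
          · exact (Finset.subset_insert t T).trans Finset.subset_union_left
          · intro habs
            have : t ∈ T := habs (Finset.mem_union_left _ (Finset.mem_insert_self t T))
            exact ht this
        have := hpair T _ hssub hT
        cases h' : c (X₀ ∪ I.biUnion fun i => {(e i : Fin (2 * s))})
        · exact absurd h' this
        · rfl
    · -- Case B : a blue set `T` with `|T| > s`; build a red cube strictly below `T`.
      have hcard : s + 1 ≤ T.card := hgt
      obtain ⟨S, hSsub, hScard⟩ := Finset.exists_subset_card_eq hcard
      set e := S.orderIsoOfFin hScard with he
      set X₀ : Finset (Fin (2 * s)) := T \ S with hX₀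
      set z : Fin (2 * s) := (e (Fin.last s) : Fin (2 * s)) with hz
      refine ⟨X₀, fun i => {(e i.castSucc : Fin (2 * s))},
        fun i => ⟨_, Finset.mem_singleton_self _⟩, ?_, ?_, ?_⟩
      · intro i
        rw [Finset.disjoint_singleton_right, hX₀, Finset.mem_sdiff]
        rintro ⟨-, hnot⟩
        exact hnot (e i.castSucc).2
      · intro i j hij
        rw [Finset.disjoint_singleton_left, Finset.mem_singleton]
        intro h
        exact hij (Fin.castSucc_injective s (e.injective (Subtype.ext h)))
      · intro I
        set U := X₀ ∪ I.biUnion fun i => {(e i.castSucc : Fin (2 * s))} with hU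
        have hUsub : U ⊆ T := by
          intro x hx
          rw [hU, Finset.mem_union] at hx
          rcases hx with hx | hx
          · exact (Finset.sdiff_subset) hx
          · rw [Finset.mem_biUnion] at hx
            obtain ⟨i, -, hxi⟩ := hx
            rw [Finset.mem_singleton] at hxi
            exact hSsub (hxi ▸ (e i.castSucc).2)
        have hzU : z ∉ U := by
          rw [hU, Finset.mem_union]
          rintro (hx | hx)
          · rw [hX₀, Finset.mem_sdiff] at hx
            exact hx.2 (e (Fin.last s)).2
          · rw [Finset.mem_biUnion] at hx
            obtain ⟨i, -, hxi⟩ := hx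
            rw [Finset.mem_singleton] at hxi
            have : (Fin.last s) = i.castSucc := e.injective (Subtype.ext hxi)
            exact (Fin.castSucc_lt_last i).ne' this
          
        have hssub : U ⊂ T := by
          constructor
          · exact hUsub
          · intro habs
            exact hzU (habs (hSsub (e (Fin.last s)).2))
        have := hpair U T hssub
        cases h' : c U
        · exact absurd hT (this h')
        · rfl
end

section
/- For n = 2s - 1 (s ≥ 1), the red-blue coloring of 2^[n] that colors all sets of size exactly s blue and all other sets red contains no red s-dimensional Boolean algebra and no blue pair A ⊊ B. Hence R(B_s, B_1) > 2s - 1. -/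
/-- Sublist-sum lemma: positive integers indexed by `t` with total sum at most
`2|t| - 1` admit subsets summing to every `k ≤ |t|`. -/
lemma subsum {ι : Type*} [DecidableEq ι] (t : Finset ι) (f : ι → ℕ)
    (hpos : ∀ i ∈ t, 1 ≤ f i) (hsum : ∑ i ∈ t, f i ≤ 2 * t.card - 1) :
    ∀ k ≤ t.card, ∃ I ⊆ t, ∑ i ∈ I, f i = k := by
  induction t using Finset.strongInduction with
  | _ t ih =>
    intro k hk
    rcases t.eq_empty_or_nonempty with rfl | ht
    · simp at hk
      exact ⟨∅, by simp [hk]⟩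
    · obtain ⟨j, hj, hjmax⟩ := t.exists_max_image f ht
      have hcard : 1 ≤ t.card := Finset.card_pos.mpr ht
      set t' := t.erase j with ht'
      have hsub : t' ⊂ t := Finset.erase_ssubset hj
      have hcard' : t'.card = t.card - 1 := Finset.card_erase_of_mem hj
      have hsplit : ∑ i ∈ t, f i = f j + ∑ i ∈ t', f i :=
        (Finset.add_sum_erase t f hj).symm
      have hlow : t'.card ≤ ∑ i ∈ t', f i :=
        Finset.card_nsmul_le_sum t' f 1 (fun i hi => hpos i (Finset.mem_of_mem_erase hi)) |>.trans_eq'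
          (by simp)
      by_cases hfj : f j = 1
      · -- all values are 1
        have hall : ∀ i ∈ t, f i = 1 := fun i hi =>
          le_antisymm (hfj ▸ hjmax i hi) (hpos i hi)
        obtain ⟨I, hIt, hIc⟩ := Finset.exists_subset_card_eq hk
        exact ⟨I, hIt, by
          rw [Finset.sum_congr rfl (fun i hi => hall i (hIt hi))]; simp [hIc]⟩
      · have hfj2 : 2 ≤ f j := by
          have := hpos j hj; omega
        have hsum' : ∑ i ∈ t', f i ≤ 2 * t'.card - 1 := by omega
        have hfjk : f j ≤ t.card := by omega
        rcases le_or_gt k t'.card with hk' | hk'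
        · obtain ⟨I, hIt, hIs⟩ := ih t' hsub
            (fun i hi => hpos i (Finset.mem_of_mem_erase hi)) hsum' k hk'
          exact ⟨I, hIt.trans hsub.subset, hIs⟩
        · -- k = t.card, use j plus a subset of t' summing to k - f j
          have hkeq : k = t.card := by omega
          obtain ⟨I, hIt, hIs⟩ := ih t' hsub
            (fun i hi => hpos i (Finset.mem_of_mem_erase hi)) hsum' (k - f j) (by omega)
          refine ⟨insert j I, ?_, ?_⟩
          · exact Finset.insert_subset hj (hIt.trans hsub.subset)
          · have hjI : j ∉ I := fun h => (Finset.mem_erase.mp (hIt h)).1 rfl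
            rw [Finset.sum_insert hjI, hIs]
            omega

/-- For `n = 2s - 1`, the coloring in which sets of size exactly `s` are blue
(`true`) and all other sets are red (`false`) has no red copy of `B_s` and no blue
pair `A ⊊ B`. Hence `R(B_s, B_1) > 2s - 1`. -/
theorem ramsey_Bs_B1_lower (s : ℕ) (hs : 1 ≤ s) :
    ¬ HasColoredBD (2 * s - 1) s (fun A : Finset (Fin (2 * s - 1)) => decide (A.card = s)) false ∧
      ¬ ∃ A B : Finset (Fin (2 * s - 1)), A ⊂ B ∧ A.card = s ∧ B.card = s := by
  constructor
  · rintro ⟨X₀, X, hne, hdisj0, hdisj, hcol⟩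
    -- card of any colored set
    have hcard : ∀ I : Finset (Fin s),
        (X₀ ∪ I.biUnion X).card = X₀.card + ∑ i ∈ I, (X i).card := by
      intro I
      rw [Finset.card_union_of_disjoint, Finset.card_biUnion]
      · exact fun i _ j _ hij => hdisj i j hij
      · exact Finset.disjoint_biUnion_right _ _ _ |>.mpr fun i _ => hdisj0 i
    have hne' : ∀ I : Finset (Fin s), (X₀ ∪ I.biUnion X).card ≠ s := by
      intro I
      have := hcol I
      simpa using this
    -- total size bound
    have htot : X₀.card + ∑ i : Fin s, (X i).card ≤ 2 * s - 1 := by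
      have h := (X₀ ∪ Finset.univ.biUnion X).card_le_univ
      rw [hcard Finset.univ] at h
      simpa using h
    have hposX : ∀ i : Fin s, 1 ≤ (X i).card := fun i => Finset.card_pos.mpr (hne i)
    have hlowX : s ≤ ∑ i : Fin s, (X i).card := by
      calc s = ∑ _i : Fin s, 1 := by simp
      _ ≤ ∑ i : Fin s, (X i).card := Finset.sum_le_sum fun i _ => hposX i
    have hX0 : X₀.card + s ≤ 2 * s - 1 := le_trans (by omega) htot
    obtain ⟨I, -, hIs⟩ := subsum (Finset.univ : Finset (Fin s)) (fun i => (X i).card)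
      (fun i _ => hposX i)
      (by simp only [Finset.card_univ, Fintype.card_fin]; omega)
      (s - X₀.card) (by simp only [Finset.card_univ, Fintype.card_fin]; omega)
    exact hne' I (by rw [hcard I, hIs]; omega)
  · rintro ⟨A, B, hAB, hA, hB⟩
    have := Finset.card_lt_card hAB
    omega
end

section
/- R(B_s, B_1) = 2s for all s ≥ 1: the minimum N such that for every n ≥ N, every red-blue coloring of 2^[n] contains a red copy of B_s or a blue copy of B_1 is exactly 2s. -/
/-- Subset sums of `s` positive integers with total at most `2s-1` hit every
target `t` with `1 ≤ t ≤ s`. -/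
lemma subset_sum_hits {ι : Type*} [DecidableEq ι] (a : ι → ℕ) :
    ∀ (S : Finset ι) (t : ℕ), (∀ i ∈ S, 1 ≤ a i) → 1 ≤ t → t ≤ S.card →
      (∑ i ∈ S, a i) ≤ 2 * S.card - 1 → ∃ I, I ⊆ S ∧ ∑ i ∈ I, a i = t := by
  intro S
  induction S using Finset.strongInduction with
  | _ S ih =>
    intro t h1 ht1 ht2 hsum
    have hne : S.Nonempty := Finset.card_pos.mp (lt_of_lt_of_le ht1 ht2)
    obtain ⟨i, hiS, hmax⟩ := S.exists_max_image a hne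
    have hsub : S.erase i ⊂ S := Finset.erase_ssubset hiS
    have hcard' : (S.erase i).card = S.card - 1 := Finset.card_erase_of_mem hiS
    have hsplit : a i + ∑ j ∈ S.erase i, a j = ∑ j ∈ S, a j :=
      Finset.add_sum_erase S a hiS
    have hcardpos : 1 ≤ S.card := le_trans ht1 ht2
    have herased_ge : (S.erase i).card ≤ ∑ j ∈ S.erase i, a j := by
      calc (S.erase i).card = ∑ _j ∈ S.erase i, 1 := by simp
        _ ≤ ∑ j ∈ S.erase i, a j :=
          Finset.sum_le_sum fun j hj => h1 j (Finset.mem_of_mem_erase hj)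
    rcases lt_trichotomy (a i) t with hlt | heq | hgt
    · -- max < t
      by_cases hone : a i = 1
      · -- all values are 1
        have hall : ∀ j ∈ S, a j = 1 := fun j hj =>
          le_antisymm (hone ▸ hmax j hj) (h1 j hj)
        obtain ⟨I, hIs, hIcard⟩ := Finset.exists_subset_card_eq ht2
        refine ⟨I, hIs, ?_⟩
        calc ∑ j ∈ I, a j = ∑ _j ∈ I, 1 :=
              Finset.sum_congr rfl fun j hj => hall j (hIs hj)
          _ = t := by simp [hIcard]
      · have h2 : 2 ≤ a i := by
          have := h1 i hiS; omega
        obtain ⟨I, hI, hIsum⟩ := ih (S.erase i) hsub (t - a i)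
          (fun j hj => h1 j (Finset.mem_of_mem_erase hj))
          (by omega) (by omega) (by omega)
        have hiI : i ∉ I := fun h => (Finset.mem_erase.mp (hI h)).1 rfl
        refine ⟨insert i I, ?_, ?_⟩
        · exact Finset.insert_subset hiS (hI.trans (Finset.erase_subset _ _))
        · rw [Finset.sum_insert hiI, hIsum]; omega
    · exact ⟨{i}, Finset.singleton_subset_iff.mpr hiS, by simp [heq]⟩
    · -- max > t
      have hts : t ≤ S.card - 1 := by
        by_contra h
        have ht : t = S.card := by omega
        omega
      obtain ⟨I, hI, hIsum⟩ := ih (S.erase i) hsub t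
        (fun j hj => h1 j (Finset.mem_of_mem_erase hj))
        ht1 (by omega) (by omega)
      exact ⟨I, hI.trans (Finset.erase_subset _ _), hIsum⟩

/-- Upper bound: if `2s ≤ n` then every coloring contains a red `B_s` or a blue pair. -/
lemma upper_bound (s : ℕ) (hs : 1 ≤ s) (n : ℕ) (hn : 2 * s ≤ n)
    (c : Finset (Fin n) → Bool) :
    HasColoredBD n s c true ∨
      ∃ A B : Finset (Fin n), A ⊂ B ∧ c A = false ∧ c B = false := by
  by_cases hpair : ∃ A B : Finset (Fin n), A ⊂ B ∧ c A = false ∧ c B = false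
  · exact Or.inr hpair
  left
  push_neg at hpair
  have hno : ∀ A B : Finset (Fin n), A ⊂ B → c A = false → c B = true := by
    intro A B h hA
    cases hcb : c B with
    | true => rfl
    | false => exact absurd hcb (hpair A B h hA)
  by_cases h1 : ∃ M : Finset (Fin n), M.card = s ∧ ∀ B ⊆ M, c B = true
  · -- Case 1: a red "down" s-set
    obtain ⟨M, hMcard, hMred⟩ := h1
    refine ⟨∅, fun i => {(M.orderIsoOfFin hMcard i : Fin n)}, fun i => ⟨_, Finset.mem_singleton_self _⟩,
      fun i => Finset.disjoint_empty_left _, ?_, ?_⟩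
    · intro i j hij
      rw [Finset.disjoint_singleton]
      exact fun h => hij ((M.orderIsoOfFin hMcard).injective (Subtype.coe_injective h))
    · intro I
      apply hMred
      rw [Finset.empty_union]
      refine Finset.biUnion_subset.mpr fun i _ => ?_
      simp
  by_cases h2 : ∃ T B : Finset (Fin n), T.card ≤ s ∧ c T = true ∧ B ⊆ T ∧ c B = false
  · -- Case 2: a small red set with a blue subset: everything above it is red
    obtain ⟨T, B, hTcard, hTred, hBT, hBblue⟩ := h2
    have hup : ∀ S : Finset (Fin n), T ⊆ S → c S = true := by
      intro S hTS
      cases hcs : c S with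
      | true => rfl
      | false =>
        have hBS : B ⊆ S := hBT.trans hTS
        have hBne : B ≠ S := by
          rintro rfl
          have : T = B := Finset.Subset.antisymm hTS hBT
          rw [this, hBblue] at hTred; exact absurd hTred (by simp)
        have := hno B S (ssubset_of_subset_of_ne hBS hBne) hBblue
        rw [hcs] at this; exact absurd this (by simp)
    have hcompl : s ≤ Tᶜ.card := by
      have h1 := Finset.card_compl T
      have : Fintype.card (Fin n) = n := Fintype.card_fin n
      omega
    obtain ⟨C, hCsub, hCcard⟩ := Finset.exists_subset_card_eq hcompl
    refine ⟨T, fun i => {(C.orderIsoOfFin hCcard i : Fin n)},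
      fun i => ⟨_, Finset.mem_singleton_self _⟩, ?_, ?_, ?_⟩
    · intro i
      rw [Finset.disjoint_singleton_right]
      have := hCsub (C.orderIsoOfFin hCcard i).2
      simpa using this
    · intro i j hij
      rw [Finset.disjoint_singleton]
      exact fun h => hij ((C.orderIsoOfFin hCcard).injective (Subtype.coe_injective h))
    · intro I
      exact hup _ Finset.subset_union_left
  -- Case 3: all s-sets are blue, hence all other sets are red
  have hblue : ∀ M : Finset (Fin n), M.card = s → c M = false := by
    intro M hM
    cases hcm : c M with
    | false => rfl
    | true =>
      exfalso
      apply h1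
      refine ⟨M, hM, fun B hB => ?_⟩
      cases hcb : c B with
      | true => rfl
      | false => exact absurd ⟨M, B, le_of_eq hM, hcm, hB, hcb⟩ h2
  have hred : ∀ S : Finset (Fin n), S.card ≠ s → c S = true := by
    intro S hS
    cases hcs : c S with
    | true => rfl
    | false =>
      exfalso
      rcases lt_or_gt_of_ne hS with h | h
      · obtain ⟨M, hSM, hMcard⟩ := Finset.exists_superset_card_eq (le_of_lt h)
          (by rw [Fintype.card_fin]; omega)
        have hss : S ⊂ M := ssubset_of_subset_of_ne hSM (by intro e; rw [e] at hS; exact hS hMcard)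
        have := hno S M hss hcs
        rw [hblue M hMcard] at this; simp at this
      · obtain ⟨M, hMS, hMcard⟩ := Finset.exists_subset_card_eq (le_of_lt h)
        have hss : M ⊂ S := ssubset_of_subset_of_ne hMS (by intro e; rw [← e] at hS; exact hS hMcard)
        have := hno M S hss (hblue M hMcard)
        rw [hcs] at this; simp at this
  haveI : NeZero s := ⟨by omega⟩
  have hs1 : s + 1 ≤ 2 * s := by omega
  set f : Fin (2 * s) → Fin n := Fin.castLE hn with hf_def
  have hf : Function.Injective f := Fin.castLE_injective hn
  set g : Fin (s + 1) → Fin n := fun j => f (Fin.castLE hs1 j) with hg_def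
  have hg : Function.Injective g := hf.comp (Fin.castLE_injective hs1)
  set X : Fin s → Finset (Fin n) := fun i =>
    if i = 0 then Finset.univ.image g else {f ⟨s + i.val, by omega⟩} with hX_def
  have hXcard : ∀ i : Fin s, (X i).card = if i = 0 then s + 1 else 1 := by
    intro i
    by_cases hi : i = 0
    · simp [hX_def, hi, Finset.card_image_of_injective _ hg]
    · simp [hX_def, hi]
  have hXmem : ∀ (i : Fin s) (x : Fin n), x ∈ X i →
      (i = 0 ∧ ∃ j : Fin (s + 1), g j = x) ∨ (i ≠ 0 ∧ x = f ⟨s + i.val, by omega⟩) := by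
    intro i x hx
    by_cases hi : i = 0
    · left
      refine ⟨hi, ?_⟩
      rw [hX_def] at hx; simp [hi] at hx
      obtain ⟨j, hj⟩ := hx
      exact ⟨j, hj⟩
    · right
      refine ⟨hi, ?_⟩
      rw [hX_def] at hx; simp [hi] at hx
      exact hx
  have hXdisj : ∀ i j : Fin s, i ≠ j → Disjoint (X i) (X j) := by
    intro i j hij
    rw [Finset.disjoint_left]
    intro x hxi hxj
    rcases hXmem i x hxi with ⟨hi0, ji, hji⟩ | ⟨hi0, hxi'⟩ <;>
      rcases hXmem j x hxj with ⟨hj0, jj, hjj⟩ | ⟨hj0, hxj'⟩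
    · exact hij (hi0.trans hj0.symm)
    · -- x in image g and x = f ⟨s + j.val⟩
      have : Fin.castLE hs1 ji = (⟨s + j.val, by omega⟩ : Fin (2 * s)) := by
        apply hf; exact hji.trans hxj'
      have hv : (ji : ℕ) = s + j.val := congrArg Fin.val this
      have hj1 : (j : ℕ) ≠ 0 := fun h => hj0 (Fin.ext h)
      have := ji.isLt; omega
    · have : Fin.castLE hs1 jj = (⟨s + i.val, by omega⟩ : Fin (2 * s)) := by
        apply hf; exact hjj.trans hxi'
      have hv : (jj : ℕ) = s + i.val := congrArg Fin.val this
      have hi1 : (i : ℕ) ≠ 0 := fun h => hi0 (Fin.ext h)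
      have := jj.isLt; omega
    · have : (⟨s + i.val, by omega⟩ : Fin (2 * s)) = ⟨s + j.val, by omega⟩ := by
        apply hf; exact hxi'.symm.trans hxj'
      have hv : s + i.val = s + j.val := congrArg Fin.val this
      exact hij (Fin.ext (by omega))
  refine ⟨∅, X, ?_, fun i => Finset.disjoint_empty_left _, hXdisj, ?_⟩
  · intro i
    by_cases hi : i = 0
    · refine ⟨g 0, ?_⟩
      rw [hX_def]; simp [hi]
    · refine ⟨f ⟨s + i.val, by omega⟩, ?_⟩
      rw [hX_def]; simp [hi]
  · intro I
    rw [Finset.empty_union]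
    apply hred
    rw [Finset.card_biUnion (fun i _ j _ hij => hXdisj i j hij)]
    by_cases h0 : (0 : Fin s) ∈ I
    · have hsum : ∑ i ∈ I, (X i).card = (s + 1) + ∑ i ∈ I.erase 0, (X i).card := by
        rw [← Finset.add_sum_erase I _ h0, hXcard]; simp
      have hones : ∑ i ∈ I.erase 0, (X i).card = (I.erase 0).card := by
        rw [Finset.card_eq_sum_ones]
        refine Finset.sum_congr rfl fun i hi => ?_
        rw [hXcard]
        simp [Finset.ne_of_mem_erase hi]
      omega
    · have hones : ∑ i ∈ I, (X i).card = I.card := by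
        rw [Finset.card_eq_sum_ones]
        refine Finset.sum_congr rfl fun i hi => ?_
        rw [hXcard]
        have : i ≠ 0 := fun e => h0 (e ▸ hi)
        simp [this]
      have hIsub : I ⊆ Finset.univ.erase 0 := fun i hi =>
        Finset.mem_erase.mpr ⟨fun e => h0 (e ▸ hi), Finset.mem_univ i⟩
      have hIcard : I.card ≤ s - 1 := by
        have := Finset.card_le_card hIsub
        rwa [Finset.card_erase_of_mem (Finset.mem_univ 0), Finset.card_univ,
          Fintype.card_fin] at this
      omega

/-- `R(B_s, B_1) = 2s`: `2s` is the least `N` such that for every `n ≥ N` and every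
red–blue coloring of `2^[n]` there is a red (`true`) copy of `B_s` or a blue
(`false`) pair `A ⊊ B`. -/
theorem ramsey_Bs_B1_eq (s : ℕ) (hs : 1 ≤ s) :
    IsLeast {N : ℕ | ∀ n : ℕ, N ≤ n → ∀ c : Finset (Fin n) → Bool,
      HasColoredBD n s c true ∨
        ∃ A B : Finset (Fin n), A ⊂ B ∧ c A = false ∧ c B = false} (2 * s) := by
  constructor
  · intro n hn c
    exact upper_bound s hs n hn c
  · intro N hN
    by_contra hlt
    push_neg at hlt
    set m := 2 * s - 1 with hm
    have hNm : N ≤ m := by omega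
    have h := hN m hNm (fun S => decide (S.card ≠ s))
    rcases h with hBD | ⟨A, B, hAB, hA, hB⟩
    · obtain ⟨X₀, X, hne, hd0, hd, hcol⟩ := hBD
      have hsum_card : ∀ I : Finset (Fin s),
          (X₀ ∪ I.biUnion X).card = X₀.card + ∑ i ∈ I, (X i).card := by
        intro I
        rw [Finset.card_union_of_disjoint, Finset.card_biUnion (fun i _ j _ hij => hd i j hij)]
        exact Finset.disjoint_biUnion_right _ _ _ |>.mpr fun i _ => hd0 i
      have hcard_ne : ∀ I : Finset (Fin s), X₀.card + ∑ i ∈ I, (X i).card ≠ s := by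
        intro I
        have hc := hcol I
        have : (X₀ ∪ I.biUnion X).card ≠ s := by
          simpa using hc
        rwa [hsum_card] at this
      have htotal : X₀.card + ∑ i : Fin s, (X i).card ≤ m := by
        have hle := Finset.card_le_univ (X₀ ∪ Finset.univ.biUnion X)
        rw [hsum_card, Fintype.card_fin] at hle
        exact hle
      have hssum : s ≤ ∑ i : Fin s, (X i).card := by
        calc s = ∑ _i : Fin s, 1 := by simp
          _ ≤ ∑ i : Fin s, (X i).card :=
            Finset.sum_le_sum fun i _ => Finset.card_pos.mpr (hne i)
      have hX0 : X₀.card + 1 ≤ s := by omega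
      obtain ⟨I, hIsub, hIsum⟩ := subset_sum_hits (fun i => (X i).card) Finset.univ
        (s - X₀.card) (fun i _ => Finset.card_pos.mpr (hne i)) (by omega)
        (by rw [Finset.card_univ, Fintype.card_fin]; omega)
        (by rw [Finset.card_univ, Fintype.card_fin]
            have he : (∑ i ∈ Finset.univ, (fun i => (X i).card) i)
                = ∑ i : Fin s, (X i).card := rfl
            rw [he]; omega)
      have hIsum' : ∑ i ∈ I, (X i).card = s - X₀.card := hIsum
      exact hcard_ne I (by omega)
    · have hA' : A.card = s := by simpa using hA
      have hB' : B.card = s := by simpa using hB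
      have := Finset.card_lt_card hAB
      omega
end

section
/- Let F ⊆ {0,1,...,n} be a set of integers and let 𝓕 = {A ⊆ [n] : |A| ∈ F}. Then F contains a d-dimensional affine cube {x_0 + Σ_{i∈I} x_i : I ⊆ [d]} (with x_0 ≥ 0, x_1,...,x_d ≥ 1, and x_0 + x_1 + ... + x_d ≤ n) if and only if 𝓕 contains a d-dimensional Boolean algebra. -/
/-- `F ⊆ {0, …, n}` contains an affine `d`-cube fitting inside `{0, …, n}`
iff the family of subsets of `[n]` with sizes in `F` contains a `d`-dimensional
Boolean algebra. -/
theorem affine_cube_iff_boolean_algebra (n d : ℕ) (F : Finset ℕ)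
    (hF : ∀ m ∈ F, m ≤ n) :
    (∃ (x₀ : ℕ) (x : Fin d → ℕ), (∀ i, 1 ≤ x i) ∧ x₀ + ∑ i, x i ≤ n ∧
        ∀ I : Finset (Fin d), x₀ + ∑ i ∈ I, x i ∈ F) ↔
      ContainsBD n d ((Finset.univ : Finset (Finset (Fin n))).filter (fun A => A.card ∈ F)) := by
  constructor
  · rintro ⟨x₀, x, hx1, hxn, hxF⟩
    set f : Fin d → ℕ := fun i => x₀ + ∑ j ∈ Finset.Iio i, x j with hf
    have hfb : ∀ i, f i + x i ≤ x₀ + ∑ j, x j := by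
      intro i
      have h : ∑ j ∈ insert i (Finset.Iio i), x j ≤ ∑ j, x j :=
        Finset.sum_le_sum_of_subset (Finset.subset_univ _)
      rw [Finset.sum_insert (by simp)] at h
      simp only [hf]; omega
    have hlt : ∀ {i j : Fin d}, i < j → f i + x i ≤ f j := by
      intro i j hij
      have hsub : insert i (Finset.Iio i) ⊆ Finset.Iio j := by
        intro k hk
        simp only [Finset.mem_insert, Finset.mem_Iio] at *
        rcases hk with rfl | hk
        · exact hij
        · exact hk.trans hij
      have h := Finset.sum_le_sum_of_subset (f := x) hsub
      rw [Finset.sum_insert (by simp)] at h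
      simp only [hf]; omega
    have hmem : ∀ i, ∀ m ∈ Finset.Ico (f i) (f i + x i), m < n := by
      intro i m hm
      simp only [Finset.mem_Ico] at hm
      have := hfb i; omega
    have hmem0 : ∀ m ∈ Finset.Ico 0 x₀, m < n := by
      intro m hm; simp only [Finset.mem_Ico] at hm; omega
    refine ⟨(Finset.Ico 0 x₀).attachFin hmem0,
      fun i => (Finset.Ico (f i) (f i + x i)).attachFin (hmem i), ?_, ?_, ?_, ?_⟩
    · intro i
      rw [← Finset.card_pos, Finset.card_attachFin, Nat.card_Ico]
      have := hx1 i; omega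
    · intro i
      rw [Finset.disjoint_left]
      intro a ha ha'
      rw [Finset.mem_attachFin, Finset.mem_Ico] at ha ha'
      have : x₀ ≤ f i := by simp only [hf]; omega
      omega
    · intro i j hij
      rw [Finset.disjoint_left]
      intro a ha ha'
      rw [Finset.mem_attachFin, Finset.mem_Ico] at ha ha'
      rcases lt_or_gt_of_ne hij with h | h
      · have := hlt h; omega
      · have := hlt h; omega
    · intro I
      simp only [Finset.mem_filter, Finset.mem_univ, true_and]
      have hdisj : ∀ i ∈ I, ∀ j ∈ I, i ≠ j →
          Disjoint ((Finset.Ico (f i) (f i + x i)).attachFin (hmem i))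
            ((Finset.Ico (f j) (f j + x j)).attachFin (hmem j)) := by
        intro i _ j _ hij
        rw [Finset.disjoint_left]
        intro a ha ha'
        rw [Finset.mem_attachFin, Finset.mem_Ico] at ha ha'
        rcases lt_or_gt_of_ne hij with h | h
        · have := hlt h; omega
        · have := hlt h; omega
      have hd0 : Disjoint ((Finset.Ico 0 x₀).attachFin hmem0)
          (I.biUnion fun i => (Finset.Ico (f i) (f i + x i)).attachFin (hmem i)) := by
        rw [Finset.disjoint_biUnion_right]
        intro i _
        rw [Finset.disjoint_left]
        intro a ha ha'
        rw [Finset.mem_attachFin, Finset.mem_Ico] at ha ha'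
        have : x₀ ≤ f i := by simp only [hf]; omega
        omega
      rw [Finset.card_union_of_disjoint hd0, Finset.card_biUnion hdisj]
      simp only [Finset.card_attachFin, Nat.card_Ico]
      have : ∑ i ∈ I, (f i + x i - f i) = ∑ i ∈ I, x i :=
        Finset.sum_congr rfl (fun i _ => by omega)
      rw [this]
      simpa using hxF I
  · rintro ⟨X₀, X, hne, hd0, hdij, hmem⟩
    refine ⟨X₀.card, fun i => (X i).card, fun i => (hne i).card_pos, ?_, ?_⟩
    all_goals
      have hcard : ∀ I : Finset (Fin d),
          (X₀ ∪ I.biUnion X).card = X₀.card + ∑ i ∈ I, (X i).card := by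
        intro I
        rw [Finset.card_union_of_disjoint, Finset.card_biUnion]
        · exact fun i _ j _ h => hdij i j h
        · rw [Finset.disjoint_biUnion_right]
          exact fun i _ => hd0 i
    · have h := hcard Finset.univ
      calc X₀.card + ∑ i, (X i).card = (X₀ ∪ Finset.univ.biUnion X).card := h.symm
        _ ≤ (Finset.univ : Finset (Fin n)).card := Finset.card_le_card (Finset.subset_univ _)
        _ = n := by simp
    · intro I
      have h := hmem I
      simp only [Finset.mem_filter, Finset.mem_univ, true_and] at h
      rw [← hcard I]
      exact h
end
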